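/- arXiv:1105.6083 — 12 statements merged into one kernel-verified Lean document; each statement's English description precedes it below -/
import Mathlib

section
/- Let m, n, r be positive integers with gcd(m,n) = 1, let m₁,…,m_k be positive integers with m₁+⋯+m_k = r·m, and let n₁,…,n_ℓ be positive integers with n₁+⋯+n_ℓ = r·n. Then Σ_{i=1}^{k} Σ_{j=1}^{ℓ} ((m_i − 1)(n_j − 1) + gcd(m_i, n_j) − 1) ≤ r²mn − rm − rn + r. Equivalently, δ₀ := Σ_{i,j} δ(m_i,n_j) is at most δ_max := (r²mn − rm − rn + r)/2. -/
private def fδ (a b : ℕ) : ℤ := ((a : ℤ) - 1) * ((b : ℤ) - 1) + (Nat.gcd a b : ℤ) - 1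

private lemma fδ_comm (a b : ℕ) : fδ a b = fδ b a := by
  unfold fδ; rw [Nat.gcd_comm]; ring

private lemma gcd_aux {g1 g2 c : ℕ} (h12 : g1 ≤ g2) (h1 : g1 ∣ c) (h2 : g2 ∣ c)
    (hc : 0 < c) : g1 + g2 ≤ c + Nat.gcd g1 g2 := by
  rcases eq_or_lt_of_le (Nat.le_of_dvd hc h2) with h | h
  · subst h
    rw [Nat.gcd_eq_left h1]
    omega
  · obtain ⟨t, ht⟩ := h2
    have ht2 : 2 ≤ t := by
      rcases t with _ | _ | t <;> omega
    have : 2 * g2 ≤ c := by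
      calc 2 * g2 ≤ g2 * t := by nlinarith
        _ = c := ht.symm
    omega

private lemma gcd_add_le (a b c : ℕ) (hc : 0 < c) :
    Nat.gcd a c + Nat.gcd b c ≤ c + Nat.gcd (a + b) c := by
  set g1 := Nat.gcd a c with hg1
  set g2 := Nat.gcd b c with hg2
  have hd : Nat.gcd g1 g2 ∣ Nat.gcd (a + b) c := by
    apply Nat.dvd_gcd
    · exact Dvd.dvd.add ((Nat.gcd_dvd_left g1 g2).trans (Nat.gcd_dvd_left a c))
        ((Nat.gcd_dvd_right g1 g2).trans (Nat.gcd_dvd_left b c))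
    · exact (Nat.gcd_dvd_left g1 g2).trans (Nat.gcd_dvd_right a c)
  have hle : Nat.gcd g1 g2 ≤ Nat.gcd (a + b) c :=
    Nat.le_of_dvd (Nat.gcd_pos_of_pos_right _ hc) hd
  have h1 : g1 ∣ c := Nat.gcd_dvd_right a c
  have h2 : g2 ∣ c := Nat.gcd_dvd_right b c
  rcases le_total g1 g2 with h | h
  · have := gcd_aux h h1 h2 hc; omega
  · have := gcd_aux h h2 h1 hc
    rw [Nat.gcd_comm g2 g1] at this
    omega

private lemma fδ_superadd (a b c : ℕ) (hc : 0 < c) :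
    fδ a c + fδ b c ≤ fδ (a + b) c := by
  have h := gcd_add_le a b c hc
  have h' : (Nat.gcd a c : ℤ) + (Nat.gcd b c : ℤ) ≤ (c : ℤ) + (Nat.gcd (a + b) c : ℤ) := by
    exact_mod_cast h
  unfold fδ
  push_cast
  nlinarith [h']

private lemma sum_fδ_le {ι : Type*} (c : ℕ) (hc : 0 < c) (s : Finset ι)
    (hs : s.Nonempty) (a : ι → ℕ) :
    ∑ i ∈ s, fδ (a i) c ≤ fδ (∑ i ∈ s, a i) c := by
  induction hs using Finset.Nonempty.cons_induction with
  | singleton i => simp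
  | cons i s hi hs ih =>
      rw [Finset.sum_cons, Finset.sum_cons]
      calc fδ (a i) c + ∑ j ∈ s, fδ (a j) c
          ≤ fδ (a i) c + fδ (∑ j ∈ s, a j) c := by linarith
        _ ≤ fδ (a i + ∑ j ∈ s, a j) c := fδ_superadd _ _ _ hc

/-- Lemma 2.2: for partitions `a` of `r*m` and `b` of `r*n` into positive parts,
with `gcd m n = 1`, one has
`∑ᵢ∑ⱼ ((mᵢ−1)(nⱼ−1) + gcd(mᵢ,nⱼ) − 1) ≤ r²mn − rm − rn + r`,
i.e. `δ₀ ≤ δ_max`. -/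
theorem delta_zero_le_delta_max
    (m n r k l : ℕ) (hm : 0 < m) (hn : 0 < n) (hr : 0 < r)
    (hmn : Nat.gcd m n = 1)
    (a : Fin k → ℕ) (ha : ∀ i, 0 < a i) (hsa : ∑ i, a i = r * m)
    (b : Fin l → ℕ) (hb : ∀ j, 0 < b j) (hsb : ∑ j, b j = r * n) :
    ∑ i, ∑ j, (((a i : ℤ) - 1) * ((b j : ℤ) - 1) + (Nat.gcd (a i) (b j) : ℤ) - 1)
      ≤ (r : ℤ) ^ 2 * m * n - r * m - r * n + r := by
  have hk : k ≠ 0 := by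
    rintro rfl
    simp at hsa
    omega
  have hl : l ≠ 0 := by
    rintro rfl
    simp at hsb
    omega
  have hkne : (Finset.univ : Finset (Fin k)).Nonempty := by
    rw [Finset.univ_nonempty_iff]
    exact ⟨⟨0, Nat.pos_of_ne_zero hk⟩⟩
  have hlne : (Finset.univ : Finset (Fin l)).Nonempty := by
    rw [Finset.univ_nonempty_iff]
    exact ⟨⟨0, Nat.pos_of_ne_zero hl⟩⟩
  have step1 : ∀ i, ∑ j, fδ (a i) (b j) ≤ fδ (a i) (r * n) := by
    intro i
    calc ∑ j, fδ (a i) (b j) = ∑ j, fδ (b j) (a i) := by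
          simp_rw [fδ_comm]
      _ ≤ fδ (∑ j, b j) (a i) := sum_fδ_le (a i) (ha i) _ hlne b
      _ = fδ (a i) (r * n) := by rw [hsb, fδ_comm]
  have hrn : 0 < r * n := Nat.mul_pos hr hn
  have step2 : ∑ i, ∑ j, fδ (a i) (b j) ≤ fδ (r * m) (r * n) := by
    calc ∑ i, ∑ j, fδ (a i) (b j) ≤ ∑ i, fδ (a i) (r * n) :=
          Finset.sum_le_sum fun i _ => step1 i
      _ ≤ fδ (∑ i, a i) (r * n) := sum_fδ_le (r * n) hrn _ hkne a
      _ = fδ (r * m) (r * n) := by rw [hsa]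
  have hgcd : Nat.gcd (r * m) (r * n) = r := by
    rw [Nat.gcd_mul_left, hmn, mul_one]
  have hfin : fδ (r * m) (r * n) = (r : ℤ) ^ 2 * m * n - r * m - r * n + r := by
    unfold fδ
    rw [hgcd]
    push_cast
    ring
  calc ∑ i, ∑ j, (((a i : ℤ) - 1) * ((b j : ℤ) - 1) + (Nat.gcd (a i) (b j) : ℤ) - 1)
      = ∑ i, ∑ j, fδ (a i) (b j) := rfl
    _ ≤ fδ (r * m) (r * n) := step2
    _ = _ := hfin
end

section
/- Let M and N be positive integers, let m₁,…,m_k be positive integers with m₁+⋯+m_k = M, and let n₁,…,n_ℓ be positive integers with n₁+⋯+n_ℓ = N. Then Σ_{i=1}^{k} Σ_{j=1}^{ℓ} gcd(m_i, n_j) ≤ (ℓ−1)·M + (k−1)·N + gcd(M, N). -/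
lemma gcd_add_le_aux (x y n : ℕ) (hn : 0 < n) :
    Nat.gcd x n + Nat.gcd y n ≤ n + Nat.gcd (x + y) n := by
  set g := Nat.gcd x n with hg
  set h := Nat.gcd y n with hh
  set d := Nat.gcd g h with hd
  have hgpos : 0 < g := Nat.gcd_pos_of_pos_right _ hn
  have hhpos : 0 < h := Nat.gcd_pos_of_pos_right _ hn
  have hdpos : 0 < d := Nat.gcd_pos_of_pos_right _ hhpos
  have hdg : d ≤ g := Nat.le_of_dvd hgpos (Nat.gcd_dvd_left g h)
  have hdh : d ≤ h := Nat.le_of_dvd hhpos (Nat.gcd_dvd_right g h)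
  have hlcm : Nat.lcm g h ∣ n :=
    Nat.lcm_dvd (Nat.gcd_dvd_right x n) (Nat.gcd_dvd_right y n)
  have hlcmn : Nat.lcm g h ≤ n := Nat.le_of_dvd hn hlcm
  have hdxy : d ∣ x + y :=
    Dvd.dvd.add ((Nat.gcd_dvd_left g h).trans (Nat.gcd_dvd_left x n))
      ((Nat.gcd_dvd_right g h).trans (Nat.gcd_dvd_left y n))
  have hdn : d ∣ n := (Nat.gcd_dvd_left g h).trans (Nat.gcd_dvd_right x n)
  have hdle : d ≤ Nat.gcd (x + y) n :=
    Nat.le_of_dvd (Nat.gcd_pos_of_pos_right _ hn) (Nat.dvd_gcd hdxy hdn)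
  have hml : d * Nat.lcm g h = g * h := Nat.gcd_mul_lcm g h
  have key : g + h ≤ d + Nat.lcm g h := by
    have h1 : d * (g + h) ≤ d * (d + Nat.lcm g h) := by
      have : d * g + d * h ≤ d * d + g * h := by nlinarith
      calc d * (g + h) = d * g + d * h := by ring
        _ ≤ d * d + g * h := this
        _ = d * (d + Nat.lcm g h) := by rw [Nat.mul_add, hml]
    exact Nat.le_of_mul_le_mul_left h1 hdpos
  calc g + h ≤ d + Nat.lcm g h := key
    _ ≤ Nat.gcd (x + y) n + n := Nat.add_le_add hdle hlcmn
    _ = n + Nat.gcd (x + y) n := Nat.add_comm _ _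

lemma sum_gcd_le_aux (n : ℕ) (hn : 0 < n) :
    ∀ (k : ℕ) (a : Fin k → ℕ),
      ∑ i, Nat.gcd (a i) n ≤ (k - 1) * n + Nat.gcd (∑ i, a i) n := by
  intro k
  induction k with
  | zero =>
      intro a
      simp [Nat.gcd_zero_left]
  | succ k ih =>
      intro a
      rcases Nat.eq_zero_or_pos k with hk | hk
      · subst hk
        simp
      · rw [Fin.sum_univ_succ, Fin.sum_univ_succ]
        have h1 := ih (fun i => a i.succ)
        have h2 := gcd_add_le_aux (a 0) (∑ i : Fin k, a i.succ) n hn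
        calc Nat.gcd (a 0) n + ∑ i : Fin k, Nat.gcd (a i.succ) n
            ≤ Nat.gcd (a 0) n + ((k - 1) * n + Nat.gcd (∑ i : Fin k, a i.succ) n) :=
              Nat.add_le_add_left h1 _
          _ = (k - 1) * n + (Nat.gcd (a 0) n + Nat.gcd (∑ i : Fin k, a i.succ) n) := by ring
          _ ≤ (k - 1) * n + (n + Nat.gcd (a 0 + ∑ i : Fin k, a i.succ) n) :=
              Nat.add_le_add_left h2 _
          _ = ((k - 1) * n + n) + Nat.gcd (a 0 + ∑ i : Fin k, a i.succ) n := by ring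
          _ ≤ (k + 1 - 1) * n + Nat.gcd (a 0 + ∑ i : Fin k, a i.succ) n := by
              have hkk : (k - 1) * n + n ≤ (k + 1 - 1) * n := by
                cases k with
                | zero => omega
                | succ k' => simp [Nat.succ_sub_one, Nat.succ_mul]
              exact Nat.add_le_add_right hkk _

/-- Core inequality of Lemma 2.2: for partitions `a` of `M` and `b` of `N` into
positive parts, `∑ᵢ∑ⱼ gcd(mᵢ,nⱼ) ≤ (ℓ−1)M + (k−1)N + gcd(M,N)`. -/
theorem sum_gcd_le (M N k l : ℕ) (hM : 0 < M) (hN : 0 < N)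
    (a : Fin k → ℕ) (ha : ∀ i, 0 < a i) (hsa : ∑ i, a i = M)
    (b : Fin l → ℕ) (hb : ∀ j, 0 < b j) (hsb : ∑ j, b j = N) :
    ∑ i, ∑ j, Nat.gcd (a i) (b j) ≤ (l - 1) * M + (k - 1) * N + Nat.gcd M N := by
  rw [Finset.sum_comm]
  have step1 : ∀ j : Fin l, ∑ i, Nat.gcd (a i) (b j) ≤ (k - 1) * b j + Nat.gcd M (b j) := by
    intro j
    have := sum_gcd_le_aux (b j) (hb j) k a
    rwa [hsa] at this
  calc ∑ j, ∑ i, Nat.gcd (a i) (b j)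
      ≤ ∑ j, ((k - 1) * b j + Nat.gcd M (b j)) := Finset.sum_le_sum fun j _ => step1 j
    _ = (k - 1) * N + ∑ j, Nat.gcd (b j) M := by
        rw [Finset.sum_add_distrib, ← Finset.mul_sum, hsb]
        simp [Nat.gcd_comm]
    _ ≤ (k - 1) * N + ((l - 1) * M + Nat.gcd N M) := by
        have := sum_gcd_le_aux M hM l b
        rw [hsb] at this
        exact Nat.add_le_add_left this _
    _ = (l - 1) * M + (k - 1) * N + Nat.gcd M N := by
        rw [Nat.gcd_comm]; ring
end

section
/- Let m ≤ n be coprime positive integers and r a positive integer. Let m₁,…,m_k, n₁,…,n_ℓ be a pair of partitions of (rm, rn) into positive parts with gcd-sum Σ = Σ_{i,j} gcd(m_i,n_j), and m'₁,…,m'_{k'}, n'₁,…,n'_{ℓ'} a second pair of partitions of (rm, rn) into positive parts with gcd-sum Σ'. Suppose Σ + Σ' = (ℓ+ℓ'−2)·rm + (k+k'−2)·rn (the genus-one condition δ₀ + δ_∞ = 2δ_max − r), and suppose Σ − ℓ·rm − k·rn ≥ Σ' − ℓ'·rm − k'·rn (i.e. δ₀ ≥ δ_∞). Then either (a) r is even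 and Σ = (ℓ−1)rm + (k−1)rn and Σ' = (ℓ'−1)rm + (k'−1)rn (i.e. δ₀ = δ_∞ = δ_max − r/2), or (b) Σ = (ℓ−1)rm + (k−1)rn + r and Σ' = (ℓ'−1)rm + (k'−1)rn − r (i.e. δ₀ = δ_max and δ_∞ = δ_max − r). -/
/-!
Write `Σ = ∑ gcd(aᵢ, bⱼ)` for partitions `a` of `A` into `k` parts and `b` of `B` into `l` parts,
and `g = gcd(A, B)`. The bound `δ ≤ δ_max` comes with a gap: either `Σ + A + B ≤ lA + kB`
(`δ ≤ δ_max - g/2`) or `Σ + A + B = lA + kB + g` (`δ = δ_max`). For `k, l ≥ 2` the column of the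
smallest part `bⱼ` contributes at most `k bⱼ ≤ kB/2` and every other column at most `A`. For
`k = 1` the term `gcd(A, bⱼ)` is `A` when `A ∣ bⱼ` and at most `A/2` otherwise; if at most one
`bⱼ` is not divisible by `A`, its term is `gcd(A, B)`.

The genus-one condition together with `δ₀ ≥ δ_∞` gives `δ₀ ≥ δ_max - r/2`, so `δ₀` is
`δ_max - r/2` or `δ_max`. In the first case integrality of `δ₀` (each
`gcd(x, y) + xy + x + y` is even) forces `rm` and `rn` to be even, hence `r = gcd(rm, rn)` is even.
-/

open Finset

namespace Nat

theorem two_mul_gcd_le_of_not_dvd {a b : ℕ} (ha : 0 < a) (h : ¬ a ∣ b) : 2 * gcd a b ≤ a := by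
  obtain ⟨t, ht⟩ := gcd_dvd_left a b
  have ht₀ : t ≠ 0 := by rintro rfl; omega
  have ht₁ : t ≠ 1 := by rintro rfl; exact h (by rw [ht, mul_one]; exact gcd_dvd_right a b)
  nlinarith [show 2 ≤ t by omega]

theorem even_gcd_iff {x y : ℕ} : Even (gcd x y) ↔ Even x ∧ Even y := by
  simp only [even_iff_two_dvd, dvd_gcd_iff]

theorem even_mul_add_add_iff {x y : ℕ} : Even (x * y + x + y) ↔ Even x ∧ Even y := by
  by_cases hx : Even x <;> by_cases hy : Even y <;> simp [parity_simps, hx, hy]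

theorem even_gcd_add_mul_add_add (x y : ℕ) : Even (gcd x y + x * y + x + y) := by
  rw [add_assoc, add_assoc, even_add, ← add_assoc, even_mul_add_add_iff, even_gcd_iff]

end Nat

section

variable {ι κ : Type*} [Fintype ι] [Fintype κ]

theorem sum_gcd_add_eq_of_dvd_of_ne {A : ℕ} (b : κ → ℕ) {j₀ : κ} (h : ∀ j ≠ j₀, A ∣ b j) :
    ∑ j, Nat.gcd A (b j) + A = Fintype.card κ * A + Nat.gcd A (∑ j, b j) := by
  classical
  have hrest : ∀ j ∈ ({j₀}ᶜ : Finset κ), Nat.gcd A (b j) = A := fun j hj =>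
    Nat.gcd_eq_left (h j (by simpa using hj))
  obtain ⟨t, ht⟩ : A ∣ ∑ j ∈ {j₀}ᶜ, b j := dvd_sum fun j hj => h j (by simpa using hj)
  have hcard : #({j₀}ᶜ : Finset κ) + 1 = Fintype.card κ := by
    rw [card_compl, card_singleton]
    have := Fintype.card_pos_iff.2 ⟨j₀⟩
    omega
  rw [Fintype.sum_eq_add_sum_compl j₀, Fintype.sum_eq_add_sum_compl j₀ b, sum_congr rfl hrest,
    ht, Nat.gcd_add_mul_left_right, sum_const, smul_eq_mul, ← hcard]
  ring

theorem sum_gcd_add_le_of_not_dvd {A : ℕ} (hA : 0 < A) (b : κ → ℕ) {j₁ j₂ : κ}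
    (hne : j₁ ≠ j₂) (h₁ : ¬ A ∣ b j₁) (h₂ : ¬ A ∣ b j₂) :
    ∑ j, Nat.gcd A (b j) + A ≤ Fintype.card κ * A := by
  classical
  have hpair : ∑ j ∈ {j₁, j₂}, Nat.gcd A (b j) ≤ A := by
    rw [sum_pair hne]
    have := Nat.two_mul_gcd_le_of_not_dvd hA h₁
    have := Nat.two_mul_gcd_le_of_not_dvd hA h₂
    omega
  have hcompl : ∑ j ∈ {j₁, j₂}ᶜ, Nat.gcd A (b j) ≤ (Fintype.card κ - 2) * A := by
    simpa only [card_compl, card_pair hne, smul_eq_mul] using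
      sum_le_card_nsmul {j₁, j₂}ᶜ _ A fun j _ => Nat.gcd_le_left (b j) hA
  obtain ⟨c, hc⟩ := Nat.exists_eq_add_of_le (card_pair hne ▸ card_le_univ {j₁, j₂})
  rw [← sum_add_sum_compl {j₁, j₂}, hc]
  rw [hc] at hcompl
  simp only [Nat.add_sub_cancel_left] at hcompl
  nlinarith

theorem sum_gcd_add_le_or_eq {A : ℕ} (hA : 0 < A) (b : κ → ℕ) :
    ∑ j, Nat.gcd A (b j) + A ≤ Fintype.card κ * A ∨
      ∑ j, Nat.gcd A (b j) + A = Fintype.card κ * A + Nat.gcd A (∑ j, b j) := by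
  classical
  by_cases h : ∃ j₀, ∀ j ≠ j₀, A ∣ b j
  · obtain ⟨j₀, h⟩ := h
    exact Or.inr (sum_gcd_add_eq_of_dvd_of_ne b h)
  push Not at h
  cases isEmpty_or_nonempty κ
  · simp
  obtain ⟨j₁, -, h₁⟩ := h (Classical.arbitrary κ)
  obtain ⟨j₂, hne, h₂⟩ := h j₁
  exact Or.inl (sum_gcd_add_le_of_not_dvd hA b hne.symm h₁ h₂)

theorem exists_two_mul_le_sum (b : κ → ℕ) (hκ : 1 < Fintype.card κ) :
    ∃ j₀, 2 * b j₀ ≤ ∑ j, b j := by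
  classical
  have : Nonempty κ := Fintype.card_pos_iff.1 (by omega)
  obtain ⟨j₀, -, hmin⟩ := exists_min_image univ b univ_nonempty
  obtain ⟨j₁, hne⟩ := Fintype.exists_ne_of_one_lt_card hκ j₀
  refine ⟨j₀, ?_⟩
  calc 2 * b j₀ ≤ b j₀ + b j₁ := by linarith [hmin j₁ (mem_univ _)]
    _ = ∑ j ∈ {j₀, j₁}, b j := (sum_pair hne.symm).symm
    _ ≤ ∑ j, b j := sum_le_sum_of_subset (subset_univ _)

def gcdSum (a : ι → ℕ) (b : κ → ℕ) : ℕ := ∑ i, ∑ j, Nat.gcd (a i) (b j)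

theorem gcdSum_comm (a : ι → ℕ) (b : κ → ℕ) : gcdSum b a = gcdSum a b := by
  simp only [gcdSum, Nat.gcd_comm (b _)]
  exact sum_comm

theorem gcdSum_add_le_or_eq_of_subsingleton [Subsingleton ι] (a : ι → ℕ) (ha : ∀ i, 0 < a i)
    (b : κ → ℕ) :
    gcdSum a b + ∑ i, a i + ∑ j, b j ≤
        Fintype.card κ * ∑ i, a i + Fintype.card ι * ∑ j, b j ∨
      gcdSum a b + ∑ i, a i + ∑ j, b j =
        Fintype.card κ * ∑ i, a i + Fintype.card ι * ∑ j, b j + Nat.gcd (∑ i, a i) (∑ j, b j) := by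
  cases isEmpty_or_nonempty ι
  · simp [gcdSum]
  obtain i₀ := Classical.arbitrary ι
  have : Unique ι := uniqueOfSubsingleton i₀
  simp only [gcdSum, Fintype.sum_subsingleton _ i₀, Fintype.card_unique]
  rcases sum_gcd_add_le_or_eq (ha i₀) b with h | h
  · exact Or.inl (by omega)
  · exact Or.inr (by omega)

theorem gcdSum_add_le_of_one_lt_card (a : ι → ℕ) (ha : ∀ i, 0 < a i) (b : κ → ℕ)
    (hb : ∀ j, 0 < b j) (hι : 1 < Fintype.card ι) (hκ : 1 < Fintype.card κ) :
    gcdSum a b + ∑ i, a i + ∑ j, b j ≤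
      Fintype.card κ * ∑ i, a i + Fintype.card ι * ∑ j, b j := by
  classical
  obtain ⟨j₀, hj₀⟩ := exists_two_mul_le_sum b hκ
  have hcol : ∀ j, ∑ i, Nat.gcd (a i) (b j) ≤ ∑ i, a i := fun j =>
    sum_le_sum fun i _ => Nat.gcd_le_left _ (ha i)
  have hcol₀ : ∑ i, Nat.gcd (a i) (b j₀) ≤ Fintype.card ι * b j₀ := by
    simpa using sum_le_card_nsmul univ _ (b j₀) fun i _ => Nat.gcd_le_right _ (hb j₀)
  have hrest : ∑ j ∈ {j₀}ᶜ, ∑ i, Nat.gcd (a i) (b j) ≤ (Fintype.card κ - 1) * ∑ i, a i := by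
    simpa [card_compl] using sum_le_card_nsmul {j₀}ᶜ _ _ fun j _ => hcol j
  rw [gcdSum, sum_comm, Fintype.sum_eq_add_sum_compl j₀]
  obtain ⟨c, hc⟩ := Nat.exists_eq_add_of_lt hκ
  obtain ⟨d, hd⟩ := Nat.exists_eq_add_of_lt hι
  rw [hc] at hrest ⊢
  rw [hd] at hcol₀ ⊢
  simp only [Nat.add_sub_cancel] at hrest
  nlinarith

theorem gcdSum_add_le_or_eq (a : ι → ℕ) (ha : ∀ i, 0 < a i) (b : κ → ℕ) (hb : ∀ j, 0 < b j) :
    gcdSum a b + ∑ i, a i + ∑ j, b j ≤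
        Fintype.card κ * ∑ i, a i + Fintype.card ι * ∑ j, b j ∨
      gcdSum a b + ∑ i, a i + ∑ j, b j =
        Fintype.card κ * ∑ i, a i + Fintype.card ι * ∑ j, b j + Nat.gcd (∑ i, a i) (∑ j, b j) := by
  rcases le_or_gt (Fintype.card ι) 1 with hι | hι
  · have := Fintype.card_le_one_iff_subsingleton.1 hι
    exact gcdSum_add_le_or_eq_of_subsingleton a ha b
  rcases le_or_gt (Fintype.card κ) 1 with hκ | hκ
  · have := Fintype.card_le_one_iff_subsingleton.1 hκ
    rcases gcdSum_add_le_or_eq_of_subsingleton b hb a with h | h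
    · left; rw [gcdSum_comm] at h; omega
    · right; rw [gcdSum_comm, Nat.gcd_comm] at h; omega
  exact Or.inl (gcdSum_add_le_of_one_lt_card a ha b hb hι hκ)

theorem even_gcdSum_add (a : ι → ℕ) (b : κ → ℕ) :
    Even (gcdSum a b + (∑ i, a i) * ∑ j, b j +
      Fintype.card κ * ∑ i, a i + Fintype.card ι * ∑ j, b j) := by
  have : Even (∑ i, ∑ j, (Nat.gcd (a i) (b j) + a i * b j + a i + b j)) :=
    even_sum _ fun i _ => even_sum _ fun j _ => Nat.even_gcd_add_mul_add_add (a i) (b j)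
  simpa only [sum_add_distrib, ← sum_mul_sum, sum_const, card_univ, smul_eq_mul, ← mul_sum,
    ← sum_mul, gcdSum] using this

theorem even_of_gcdSum_add_eq (a : ι → ℕ) (b : κ → ℕ)
    (h : gcdSum a b + ∑ i, a i + ∑ j, b j =
      Fintype.card κ * ∑ i, a i + Fintype.card ι * ∑ j, b j) :
    Even (∑ i, a i) ∧ Even (∑ j, b j) := by
  have hS := even_gcdSum_add a b
  rw [add_assoc (_ + _), ← h] at hS
  set A := ∑ i, a i
  set B := ∑ j, b j
  rw [show gcdSum a b + A * B + (gcdSum a b + A + B) = 2 * gcdSum a b + (A * B + A + B) by ring,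
    Nat.even_add] at hS
  exact Nat.even_mul_add_add_iff.1 (hS.1 (even_two_mul _))

end

theorem genus_one_delta_dichotomy_general
    (m n r k l k' l' : ℕ)
    (hmn : Nat.gcd m n = 1)
    (a : Fin k → ℕ) (ha : ∀ i, 0 < a i) (hsa : ∑ i, a i = r * m)
    (b : Fin l → ℕ) (hb : ∀ j, 0 < b j) (hsb : ∑ j, b j = r * n)
    (a' : Fin k' → ℕ)
    (b' : Fin l' → ℕ)
    (hgenus :
      ((∑ i, ∑ j, Nat.gcd (a i) (b j) : ℕ) : ℤ)
          + ((∑ i, ∑ j, Nat.gcd (a' i) (b' j) : ℕ) : ℤ)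
        = ((l : ℤ) + l' - 2) * (r * m) + ((k : ℤ) + k' - 2) * (r * n))
    (hord :
      ((∑ i, ∑ j, Nat.gcd (a i) (b j) : ℕ) : ℤ) - (l : ℤ) * (r * m) - (k : ℤ) * (r * n)
        ≥ ((∑ i, ∑ j, Nat.gcd (a' i) (b' j) : ℕ) : ℤ) - (l' : ℤ) * (r * m)
            - (k' : ℤ) * (r * n)) :
    (Even r ∧
      ((∑ i, ∑ j, Nat.gcd (a i) (b j) : ℕ) : ℤ)
          = ((l : ℤ) - 1) * (r * m) + ((k : ℤ) - 1) * (r * n) ∧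
      ((∑ i, ∑ j, Nat.gcd (a' i) (b' j) : ℕ) : ℤ)
          = ((l' : ℤ) - 1) * (r * m) + ((k' : ℤ) - 1) * (r * n)) ∨
    (((∑ i, ∑ j, Nat.gcd (a i) (b j) : ℕ) : ℤ)
          = ((l : ℤ) - 1) * (r * m) + ((k : ℤ) - 1) * (r * n) + r ∧
      ((∑ i, ∑ j, Nat.gcd (a' i) (b' j) : ℕ) : ℤ)
          = ((l' : ℤ) - 1) * (r * m) + ((k' : ℤ) - 1) * (r * n) - r) := by
  have hgcd : Nat.gcd (r * m) (r * n) = r := by rw [Nat.gcd_mul_left, hmn, mul_one]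
  have key := gcdSum_add_le_or_eq a ha b hb
  have parity := even_of_gcdSum_add_eq a b
  simp only [gcdSum, hsa, hsb, Fintype.card_fin, hgcd] at key parity
  set S := ∑ i, ∑ j, Nat.gcd (a i) (b j)
  set S' := ∑ i, ∑ j, Nat.gcd (a' i) (b' j)
  have lower : l * (r * m) + k * (r * n) ≤ S + r * m + r * n := by
    zify; linarith
  rcases key with hle | heq
  · have hδ := le_antisymm hle lower
    obtain ⟨hu, hv⟩ := parity hδ
    have hr : Even r := hgcd ▸ even_iff_two_dvd.2 (Nat.dvd_gcd hu.two_dvd hv.two_dvd)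
    zify at hδ
    exact Or.inl ⟨hr, by linarith, by linarith⟩
  · zify at heq
    exact Or.inr ⟨by linarith, by linarith⟩

/-- Section 2.3 (refined by Proposition 2.5): if a pair of pairs of partitions of
`(rm, rn)` satisfies the genus-one condition `δ₀ + δ_∞ = 2δ_max − r` and
`δ₀ ≥ δ_∞`, then either `δ₀ = δ_∞ = δ_max − r/2` (with `r` even) or
`δ₀ = δ_max` and `δ_∞ = δ_max − r`. -/
theorem genus_one_delta_dichotomy
    (m n r k l k' l' : ℕ) (hm : 0 < m) (hn : 0 < n) (hr : 0 < r)
    (hmn : Nat.gcd m n = 1) (hmlen : m ≤ n)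
    (a : Fin k → ℕ) (ha : ∀ i, 0 < a i) (hsa : ∑ i, a i = r * m)
    (b : Fin l → ℕ) (hb : ∀ j, 0 < b j) (hsb : ∑ j, b j = r * n)
    (a' : Fin k' → ℕ) (ha' : ∀ i, 0 < a' i) (hsa' : ∑ i, a' i = r * m)
    (b' : Fin l' → ℕ) (hb' : ∀ j, 0 < b' j) (hsb' : ∑ j, b' j = r * n)
    (hgenus :
      ((∑ i, ∑ j, Nat.gcd (a i) (b j) : ℕ) : ℤ)
          + ((∑ i, ∑ j, Nat.gcd (a' i) (b' j) : ℕ) : ℤ)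
        = ((l : ℤ) + l' - 2) * (r * m) + ((k : ℤ) + k' - 2) * (r * n))
    (hord :
      ((∑ i, ∑ j, Nat.gcd (a i) (b j) : ℕ) : ℤ) - (l : ℤ) * (r * m) - (k : ℤ) * (r * n)
        ≥ ((∑ i, ∑ j, Nat.gcd (a' i) (b' j) : ℕ) : ℤ) - (l' : ℤ) * (r * m)
            - (k' : ℤ) * (r * n)) :
    (Even r ∧
      ((∑ i, ∑ j, Nat.gcd (a i) (b j) : ℕ) : ℤ)
          = ((l : ℤ) - 1) * (r * m) + ((k : ℤ) - 1) * (r * n) ∧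
      ((∑ i, ∑ j, Nat.gcd (a' i) (b' j) : ℕ) : ℤ)
          = ((l' : ℤ) - 1) * (r * m) + ((k' : ℤ) - 1) * (r * n)) ∨
    (((∑ i, ∑ j, Nat.gcd (a i) (b j) : ℕ) : ℤ)
          = ((l : ℤ) - 1) * (r * m) + ((k : ℤ) - 1) * (r * n) + r ∧
      ((∑ i, ∑ j, Nat.gcd (a' i) (b' j) : ℕ) : ℤ)
          = ((l' : ℤ) - 1) * (r * m) + ((k' : ℤ) - 1) * (r * n) - r) :=
  genus_one_delta_dichotomy_general m n r k l k' l' hmn a ha hsa b hb hsb a' b' hgenus hord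
end

section
/- Let m ≤ n be coprime positive integers and r a positive integer. Let m₁,…,m_k, n₁,…,n_ℓ be a pair of partitions of (rm, rn) into positive parts, and m'₁,…,m'_{k'}, n'₁,…,n'_{ℓ'} a second pair of partitions of (rm, rn) into positive parts, and assume gcd of all the parts m₁,…,m_k, n₁,…,n_ℓ, m'₁,…,m'_{k'}, n'₁,…,n'_{ℓ'} equals 1. Suppose Σ_{i,j} gcd(m_i,n_j) = (ℓ−1)rm + (k−1)rn and Σ_{i',j'} gcd(m'_{i'},n'_{j'}) = (ℓ'−1)rm + (k'−1)rn (i.e. δ₀ = δ_∞ = δ_max − r/2). Then m = 1 and r = 2. -/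
open Finset

lemma two_dvd_le {d A : ℕ} (hA : 0 < A) (hd : d ∣ A) (hne : d ≠ A) : 2 * d ≤ A := by
  obtain ⟨e, rfl⟩ := hd
  rcases e with _ | _ | e
  · simp at hA
  · simp at hne
  · calc 2 * d = d * 2 := by ring
    _ ≤ d * (e + 1 + 1) := Nat.mul_le_mul_left d (by omega)

lemma arith_helper (t c S A L : ℕ) (hA : 0 < A)
    (h1 : t * A + S = (L + 1) * A) (h2 : 2 * S ≤ c * A)
    (h3 : c ≤ S) (h4 : t + c = L + 2) : c = 2 ∧ S = A := by
  have ht : t ≤ L + 1 := by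
    by_contra h
    push_neg at h
    have h5 : (L + 2) * A ≤ t * A := Nat.mul_le_mul_right A (by omega)
    have e : (L + 2) * A = (L + 1) * A + A := by ring
    omega
  obtain ⟨D, hD⟩ : ∃ D, L + 1 = t + D := ⟨L + 1 - t, by omega⟩
  have hS : S = D * A := by
    have e2 : (L + 1) * A = t * A + D * A := by rw [hD]; ring
    omega
  have h2' : (2 * D) * A ≤ c * A := by
    calc (2 * D) * A = 2 * (D * A) := by ring
    _ = 2 * S := by rw [hS]
    _ ≤ c * A := h2
  have hDc : 2 * D ≤ c := Nat.le_of_mul_le_mul_right h2' hA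
  have hc : c = D + 1 := by omega
  have hD1 : D ≤ 1 := by omega
  interval_cases D
  · simp at hS; omega
  · simp at hS; omega

lemma one_side {l A B : ℕ} (hA : 0 < A) (hB : 0 < B)
    (b : Fin l → ℕ) (hb : ∀ j, 0 < b j) (hsb : ∑ j, b j = B)
    (heq : ∑ j, Nat.gcd A (b j) = (l - 1) * A) :
    ∃ g, 0 < g ∧ g ∣ A ∧ (∀ j, g ∣ b j) ∧ 2 * g = A ∧ A ∣ B := by
  have hgpos : ∀ j, 0 < Nat.gcd A (b j) := fun j => Nat.gcd_pos_of_pos_left _ hA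
  have hgA : ∀ j, Nat.gcd A (b j) ∣ A := fun j => Nat.gcd_dvd_left _ _
  have hgb : ∀ j, Nat.gcd A (b j) ∣ b j := fun j => Nat.gcd_dvd_right _ _
  have hl2 : 2 ≤ l := by
    by_contra h
    push_neg at h
    interval_cases l
    · simp at hsb; omega
    · rw [Fin.sum_univ_one] at heq
      have := hgpos 0
      simp at heq
      omega
  obtain ⟨l₂, rfl⟩ : ∃ l₂, l = l₂ + 2 := ⟨l - 2, by omega⟩
  classical
  set T : Finset (Fin (l₂ + 2)) := univ.filter (fun j => A ∣ b j) with hT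
  set T' : Finset (Fin (l₂ + 2)) := univ.filter (fun j => ¬ A ∣ b j) with hT'
  have hsplitg : ∑ j ∈ T, Nat.gcd A (b j) + ∑ j ∈ T', Nat.gcd A (b j)
      = ∑ j, Nat.gcd A (b j) :=
    Finset.sum_filter_add_sum_filter_not _ _ _
  have hsumT : ∑ j ∈ T, Nat.gcd A (b j) = T.card * A := by
    rw [Finset.sum_congr rfl (fun j hj => ?_), Finset.sum_const, smul_eq_mul]
    exact Nat.gcd_eq_left ((Finset.mem_filter.mp hj).2)
  have hcard : T.card + T'.card = l₂ + 2 := by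
    rw [hT, hT']
    rw [Finset.card_filter_add_card_filter_not]
    simp
  have h1 : T.card * A + ∑ j ∈ T', Nat.gcd A (b j) = (l₂ + 1) * A := by
    rw [← hsumT, hsplitg, heq]
    congr 1
  have h2 : 2 * ∑ j ∈ T', Nat.gcd A (b j) ≤ T'.card * A := by
    rw [Finset.mul_sum]
    calc ∑ j ∈ T', 2 * Nat.gcd A (b j) ≤ ∑ _j ∈ T', A := by
          refine Finset.sum_le_sum fun j hj => ?_
          refine two_dvd_le hA (hgA j) fun hEq => ?_
          exact (Finset.mem_filter.mp hj).2 (hEq ▸ hgb j)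
    _ = T'.card * A := by rw [Finset.sum_const, smul_eq_mul]
  have h3 : T'.card ≤ ∑ j ∈ T', Nat.gcd A (b j) := by
    calc T'.card = ∑ _j ∈ T', 1 := by simp
    _ ≤ _ := Finset.sum_le_sum fun j _ => hgpos j
  obtain ⟨hc2, hS1⟩ := arith_helper T.card T'.card _ A l₂ hA h1 h2 h3 hcard
  obtain ⟨p, q, hpq, hTc⟩ := Finset.card_eq_two.mp hc2
  have hsumpq : Nat.gcd A (b p) + Nat.gcd A (b q) = A := by
    rw [hTc, Finset.sum_pair hpq] at hS1; exact hS1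
  have hpT' : ¬ A ∣ b p := by
    have : p ∈ T' := by rw [hTc]; simp
    exact (Finset.mem_filter.mp this).2
  have hqT' : ¬ A ∣ b q := by
    have : q ∈ T' := by rw [hTc]; simp
    exact (Finset.mem_filter.mp this).2
  have hpq' : Nat.gcd A (b p) = Nat.gcd A (b q) := by
    have h1' : Nat.gcd A (b p) ∣ Nat.gcd A (b q) := by
      have h := Nat.dvd_sub (hgA p) (dvd_refl (Nat.gcd A (b p)))
      rwa [show A - Nat.gcd A (b p) = Nat.gcd A (b q) from by omega] at h
    have h2' : Nat.gcd A (b q) ∣ Nat.gcd A (b p) := by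
      have h := Nat.dvd_sub (hgA q) (dvd_refl (Nat.gcd A (b q)))
      rwa [show A - Nat.gcd A (b q) = Nat.gcd A (b p) from by omega] at h
    exact Nat.dvd_antisymm h1' h2'
  set G := Nat.gcd A (b p) with hG
  refine ⟨G, hgpos p, hgA p, ?_, by omega, ?_⟩
  · intro j
    by_cases hj : A ∣ b j
    · exact dvd_trans (hgA p) hj
    · have : j ∈ T' := Finset.mem_filter.mpr ⟨Finset.mem_univ _, hj⟩
      rw [hTc] at this
      simp only [Finset.mem_insert, Finset.mem_singleton] at this
      rcases this with h | h
      · rw [h]; exact hgb p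
      · rw [h, hpq']; exact hgb q
  · -- A ∣ B
    rw [← hsb, ← Finset.sum_filter_add_sum_filter_not univ (fun j => A ∣ b j) b]
    refine Nat.dvd_add (Finset.dvd_sum fun j hj => (Finset.mem_filter.mp hj).2) ?_
    have : ∑ j ∈ T', b j = b p + b q := by rw [hTc, Finset.sum_pair hpq]
    rw [show (univ.filter (fun j => ¬ A ∣ b j)) = T' from rfl, this]
    have hgbp : G ∣ b p := hgb p
    have hgbq : G ∣ b q := by rw [hpq']; exact hgb q
    obtain ⟨u, hu⟩ := hgbp
    obtain ⟨v, hv⟩ := hgbq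
    have hA2 : A = 2 * G := by omega
    have hu_odd : ¬ 2 ∣ u := by
      rintro ⟨w, hw⟩
      refine hpT' ⟨w, ?_⟩
      rw [hu, hw, hA2]; ring
    have hv_odd : ¬ 2 ∣ v := by
      rintro ⟨w, hw⟩
      refine hqT' ⟨w, ?_⟩
      rw [hv, hw, hA2]; ring
    obtain ⟨s, hs⟩ : 2 ∣ u + v := by omega
    refine ⟨s, ?_⟩
    rw [hu, hv, hA2]
    calc G * u + G * v = G * (u + v) := by ring
    _ = G * (2 * s) := by rw [hs]
    _ = 2 * G * s := by ring

lemma pair_lemma {k l A B : ℕ} (hA : 0 < A) (hB : 0 < B)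
    (a : Fin k → ℕ) (ha : ∀ i, 0 < a i) (hsa : ∑ i, a i = A)
    (b : Fin l → ℕ) (hb : ∀ j, 0 < b j) (hsb : ∑ j, b j = B)
    (heq : ∑ i, ∑ j, Nat.gcd (a i) (b j) = (l - 1) * A + (k - 1) * B) :
    ∃ g, 0 < g ∧ (∀ i, g ∣ a i) ∧ (∀ j, g ∣ b j) ∧
      ((2 * g = A ∧ A ∣ B) ∨ (2 * g = B ∧ B ∣ A)) := by
  by_cases hk1 : k = 1
  · subst hk1
    rw [Fin.sum_univ_one] at hsa
    rw [Fin.sum_univ_one] at heq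
    simp only [Nat.sub_self, zero_mul, add_zero] at heq
    rw [hsa] at heq
    obtain ⟨g, hg0, hgA, hgb, h2g, hAB⟩ := one_side hA hB b hb hsb heq
    refine ⟨g, hg0, fun i => ?_, hgb, Or.inl ⟨h2g, hAB⟩⟩
    rw [Subsingleton.elim i 0, hsa]
    exact hgA
  by_cases hl1 : l = 1
  · subst hl1
    rw [Fin.sum_univ_one] at hsb
    have heq' : ∑ i, Nat.gcd B (a i) = (k - 1) * B := by
      calc ∑ i, Nat.gcd B (a i) = ∑ i, Nat.gcd (a i) (b 0) := by
            refine Finset.sum_congr rfl fun i _ => ?_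
            rw [Nat.gcd_comm, hsb]
      _ = ∑ i, ∑ j : Fin 1, Nat.gcd (a i) (b j) := by simp
      _ = (k - 1) * B := by rw [heq]; simp
    obtain ⟨g, hg0, hgB, hga, h2g, hBA⟩ := one_side hB hA a ha hsa heq'
    refine ⟨g, hg0, hga, fun j => ?_, Or.inr ⟨h2g, hBA⟩⟩
    rw [Subsingleton.elim j 0, hsb]
    exact hgB
  -- now k ≥ 2 and l ≥ 2
  have hk0 : k ≠ 0 := by rintro rfl; simp at hsa; omega
  have hl0 : l ≠ 0 := by rintro rfl; simp at hsb; omega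
  obtain ⟨k₂, rfl⟩ : ∃ k₂, k = k₂ + 2 := ⟨k - 2, by omega⟩
  obtain ⟨l₂, rfl⟩ : ∃ l₂, l = l₂ + 2 := ⟨l - 2, by omega⟩
  have heq2 : ∑ i, ∑ j, Nat.gcd (a i) (b j) = (l₂ + 1) * A + (k₂ + 1) * B := by
    rw [heq]; congr 2 <;> omega
  have hub1 : (l₂ + 1) * A + (k₂ + 1) * B ≤ (l₂ + 2) * A := by
    rw [← heq2, ← hsa]
    calc ∑ i, ∑ j, Nat.gcd (a i) (b j)
        ≤ ∑ i, ∑ _j : Fin (l₂ + 2), a i :=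
          Finset.sum_le_sum fun i _ => Finset.sum_le_sum fun j _ =>
            Nat.gcd_le_left _ (ha i)
    _ = (l₂ + 2) * ∑ i, a i := by
          rw [Finset.mul_sum]
          refine Finset.sum_congr rfl fun i _ => ?_
          simp [Finset.sum_const, Finset.card_univ, mul_comm]
  have hub2 : (l₂ + 1) * A + (k₂ + 1) * B ≤ (k₂ + 2) * B := by
    rw [← heq2, ← hsb]
    calc ∑ i, ∑ j, Nat.gcd (a i) (b j)
        ≤ ∑ _i : Fin (k₂ + 2), ∑ j, b j :=
          Finset.sum_le_sum fun i _ => Finset.sum_le_sum fun j _ =>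
            Nat.gcd_le_right _ (hb j)
    _ = (k₂ + 2) * ∑ j, b j := by
          simp [Finset.sum_const, Finset.card_univ]
  have e1 : (l₂ + 2) * A = (l₂ + 1) * A + A := by ring
  have e2 : (k₂ + 2) * B = (k₂ + 1) * B + B := by ring
  have hBA : (k₂ + 1) * B ≤ A := by omega
  have hAB : (l₂ + 1) * A ≤ B := by omega
  have hBleA : B ≤ A := le_trans (Nat.le_mul_of_pos_left B (by omega)) hBA
  have hAleB : A ≤ B := le_trans (Nat.le_mul_of_pos_left A (by omega)) hAB
  have hABeq : A = B := le_antisymm hAleB hBleA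
  have hk2 : k₂ = 0 := by
    have : (k₂ + 1) * B ≤ 1 * B := by rw [one_mul]; omega
    have := Nat.le_of_mul_le_mul_right this hB
    omega
  have hl2 : l₂ = 0 := by
    have : (l₂ + 1) * A ≤ 1 * A := by rw [one_mul]; omega
    have := Nat.le_of_mul_le_mul_right this hA
    omega
  subst hk2; subst hl2
  -- now k = l = 2 and A = B; equality forces a i ∣ b j and b j ∣ a i
  have hSa : ∑ i, ∑ j, Nat.gcd (a i) (b j) = ∑ i, ∑ _j : Fin 2, a i := by
    rw [heq2]
    have : ∑ i, ∑ _j : Fin 2, a i = 2 * A := by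
      rw [← hsa, Finset.mul_sum]
      refine Finset.sum_congr rfl fun i _ => ?_
      simp [Finset.sum_const, Finset.card_univ, mul_comm]
    omega
  have hSb : ∑ i, ∑ j, Nat.gcd (a i) (b j) = ∑ _i : Fin 2, ∑ j, b j := by
    rw [heq2]
    have : ∑ _i : Fin 2, ∑ j, b j = 2 * B := by
      rw [hsb]
      simp [Finset.sum_const, Finset.card_univ, two_mul]
    omega
  have hdvd1 : ∀ i j, a i ∣ b j := by
    have outer := (Finset.sum_eq_sum_iff_of_le
      (fun i _ => Finset.sum_le_sum fun j _ => Nat.gcd_le_left (b j) (ha i))).mp hSa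
    intro i j
    have inner := (Finset.sum_eq_sum_iff_of_le
      (fun j _ => Nat.gcd_le_left (b j) (ha i))).mp (outer i (Finset.mem_univ i)) j
      (Finset.mem_univ j)
    rw [← inner]
    exact Nat.gcd_dvd_right _ _
  have hdvd2 : ∀ i j, b j ∣ a i := by
    have outer := (Finset.sum_eq_sum_iff_of_le
      (fun i _ => Finset.sum_le_sum fun j _ => Nat.gcd_le_right _ (hb j))).mp hSb
    intro i j
    have inner := (Finset.sum_eq_sum_iff_of_le
      (fun j _ => Nat.gcd_le_right _ (hb j))).mp (outer i (Finset.mem_univ i)) j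
      (Finset.mem_univ j)
    rw [← inner]
    exact Nat.gcd_dvd_left _ _
  have hall : ∀ i j, a i = b j := fun i j => Nat.dvd_antisymm (hdvd1 i j) (hdvd2 i j)
  refine ⟨a 0, ha 0, fun i => ?_, fun j => ?_, Or.inl ⟨?_, hABeq ▸ dvd_refl A⟩⟩
  · rw [show a i = a 0 from (hall i 0).trans (hall 0 0).symm]
  · rw [← hall 0 j]
  · rw [← hsa, Fin.sum_univ_two, show a 1 = a 0 from (hall 1 0).trans (hall 0 0).symm]
    ring



/-- Proposition 2.4: if both pairs of partitions of `(rm, rn)` satisfy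
`δ₀ = δ_∞ = δ_max − r/2` (equivalently the displayed gcd equations) and all parts
have no common divisor, then `m = 1` and `r = 2`. -/
theorem prop_two_four
    (m n r k l k' l' : ℕ) (hm : 0 < m) (hn : 0 < n) (hr : 0 < r)
    (hmn : Nat.gcd m n = 1) (hmlen : m ≤ n)
    (a : Fin k → ℕ) (ha : ∀ i, 0 < a i) (hsa : ∑ i, a i = r * m)
    (b : Fin l → ℕ) (hb : ∀ j, 0 < b j) (hsb : ∑ j, b j = r * n)
    (a' : Fin k' → ℕ) (ha' : ∀ i, 0 < a' i) (hsa' : ∑ i, a' i = r * m)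
    (b' : Fin l' → ℕ) (hb' : ∀ j, 0 < b' j) (hsb' : ∑ j, b' j = r * n)
    (hcoprime :
      Nat.gcd (Finset.univ.gcd a)
        (Nat.gcd (Finset.univ.gcd b)
          (Nat.gcd (Finset.univ.gcd a') (Finset.univ.gcd b'))) = 1)
    (hdzero : ∑ i, ∑ j, Nat.gcd (a i) (b j) = (l - 1) * (r * m) + (k - 1) * (r * n))
    (hdinfty : ∑ i, ∑ j, Nat.gcd (a' i) (b' j)
        = (l' - 1) * (r * m) + (k' - 1) * (r * n)) :
    m = 1 ∧ r = 2 := by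
  have hApos : 0 < r * m := Nat.mul_pos hr hm
  have hBpos : 0 < r * n := Nat.mul_pos hr hn
  obtain ⟨g, hg0, hga, hgb, hgd⟩ := pair_lemma hApos hBpos a ha hsa b hb hsb hdzero
  obtain ⟨g', hg0', hga', hgb', hgd'⟩ :=
    pair_lemma hApos hBpos a' ha' hsa' b' hb' hsb' hdinfty
  have hgg' : Nat.gcd g g' = 1 := by
    refine Nat.dvd_one.mp ?_
    rw [← hcoprime]
    exact Nat.dvd_gcd
      (dvd_trans (Nat.gcd_dvd_left _ _) (Finset.dvd_gcd fun i _ => hga i))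
      (Nat.dvd_gcd
        (dvd_trans (Nat.gcd_dvd_left _ _) (Finset.dvd_gcd fun j _ => hgb j))
        (Nat.dvd_gcd
          (dvd_trans (Nat.gcd_dvd_right _ _) (Finset.dvd_gcd fun i _ => hga' i))
          (dvd_trans (Nat.gcd_dvd_right _ _) (Finset.dvd_gcd fun j _ => hgb' j))))
  have hmdvd : r * m ∣ r * n → m = 1 := by
    rintro ⟨s, hs⟩
    have hns : n = m * s := Nat.eq_of_mul_eq_mul_left hr (by rw [hs, mul_assoc])
    exact Nat.Coprime.eq_one_of_dvd hmn ⟨s, hns⟩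
  have hndvd : r * n ∣ r * m → n = 1 := by
    rintro ⟨s, hs⟩
    have hms : m = n * s := Nat.eq_of_mul_eq_mul_left hr (by rw [hs, mul_assoc])
    have hnm : n ∣ m := ⟨s, hms⟩
    have h1 : n ≤ m := Nat.le_of_dvd hm hnm
    have hmeq : m = n := le_antisymm hmlen h1
    rw [← hmeq] at hmn ⊢
    rw [Nat.gcd_self] at hmn
    exact hmn
  have hm1 : m = 1 := by
    rcases hgd with ⟨_, hAB⟩ | ⟨_, hBA⟩
    · exact hmdvd hAB
    · have := hndvd hBA
      omega
  have h2gr : ∀ g₀ : ℕ, (2 * g₀ = r * m ∧ r * m ∣ r * n) ∨ (2 * g₀ = r * n ∧ r * n ∣ r * m)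
      → 2 * g₀ = r := by
    rintro g₀ (⟨h2, _⟩ | ⟨h2, hBA⟩)
    · rw [hm1, mul_one] at h2; exact h2
    · have hn1 : n = 1 := hndvd hBA
      rw [hn1, mul_one] at h2; exact h2
  have hg : 2 * g = r := h2gr g hgd
  have hg' : 2 * g' = r := h2gr g' hgd'
  have : g = g' := by omega
  rw [this, Nat.gcd_self] at hgg'
  exact ⟨hm1, by omega⟩
end

section
/- Let m ≤ n be coprime positive integers, r a positive integer, and m₁,…,m_k, n₁,…,n_ℓ a pair of partitions of (rm, rn) into positive parts. Suppose that for some integer s with 0 ≤ s < r one has Σ_{i,j} gcd(m_i, n_j) = (ℓ−1)rm + (k−1)rn + r − s (i.e. δ₀ = δ_max − s/2 with s < r). Then s = 0, k = 1, and r divides n_j for every j = 1,…,ℓ (so that gcd(rm, n₁, …, n_ℓ, r) = r). -/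
open Finset

private lemma gcd_eq_right' {x b : ℕ} (h : b ∣ x) : Nat.gcd x b = b := by
  rw [Nat.gcd_comm]; exact Nat.gcd_eq_left h

private lemma two_mul_gcd_le {x b : ℕ} (hb : 0 < b) (hx : ¬ b ∣ x) :
    2 * Nat.gcd x b ≤ b := by
  have hdvd : Nat.gcd x b ∣ b := Nat.gcd_dvd_right x b
  have hne : Nat.gcd x b ≠ b := fun h => hx (h ▸ Nat.gcd_dvd_left x b)
  obtain ⟨c, hc⟩ := hdvd
  rcases c with _ | _ | c
  · omega
  · omega
  · calc 2 * Nat.gcd x b = Nat.gcd x b * 2 := by ring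
      _ ≤ Nat.gcd x b * (c + 1 + 1) := Nat.mul_le_mul_left _ (by omega)
      _ = b := hc.symm

/-- If at most one part fails to be divisible by `b`, the gcd sum attains its max. -/
private lemma lemC {k : ℕ} (a : Fin k → ℕ) (b : ℕ)
    (h : ∀ i₁ i₂, ¬ b ∣ a i₁ → ¬ b ∣ a i₂ → i₁ = i₂) :
    ∑ i, Nat.gcd (a i) b + b = k * b + Nat.gcd (∑ i, a i) b := by
  classical
  by_cases hall : ∀ i, b ∣ a i
  · have h1 : ∀ i ∈ univ, Nat.gcd (a i) b = b := fun i _ => by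
      rw [Nat.gcd_comm]; exact Nat.gcd_eq_left (hall i)
    have h2 : Nat.gcd (∑ i, a i) b = b := by
      rw [Nat.gcd_comm]; exact Nat.gcd_eq_left (dvd_sum fun i _ => hall i)
    rw [Finset.sum_congr rfl h1, Finset.sum_const, smul_eq_mul, h2,
      Finset.card_univ, Fintype.card_fin]
  · push_neg at hall
    obtain ⟨i₀, hi₀⟩ := hall
    have hk : 0 < k := i₀.pos
    have hrest : ∀ i ∈ univ.erase i₀, b ∣ a i := by
      intro i hi
      by_contra hc
      exact (Finset.ne_of_mem_erase hi) (h i i₀ hc hi₀)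
    have hsplit : a i₀ + ∑ i ∈ univ.erase i₀, a i = ∑ i, a i :=
      Finset.add_sum_erase _ a (mem_univ i₀)
    obtain ⟨t, ht⟩ : b ∣ ∑ i ∈ univ.erase i₀, a i := dvd_sum hrest
    have hg : Nat.gcd (∑ i, a i) b = Nat.gcd (a i₀) b := by
      rw [← hsplit, ht, mul_comm, Nat.gcd_add_mul_right_left]
    have hgs : Nat.gcd (a i₀) b + ∑ i ∈ univ.erase i₀, Nat.gcd (a i) b
        = ∑ i, Nat.gcd (a i) b :=
      Finset.add_sum_erase _ (fun i => Nat.gcd (a i) b) (mem_univ i₀)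
    have hrg : ∑ i ∈ univ.erase i₀, Nat.gcd (a i) b = (k - 1) * b := by
      rw [Finset.sum_congr rfl (fun i hi => gcd_eq_right' (hrest i hi)),
        Finset.sum_const, smul_eq_mul, Finset.card_erase_of_mem (mem_univ i₀),
        Finset.card_univ, Fintype.card_fin]
    have hkb : (k - 1) * b + b = k * b := by
      obtain ⟨k', rfl⟩ : ∃ k', k = k' + 1 := ⟨k - 1, by omega⟩
      simp [Nat.add_mul]
    rw [hg, ← hgs, hrg]
    omega

/-- If two parts fail to be divisible by `b`, the gcd sum is at least `b` below max. -/
private lemma lemB {k : ℕ} (a : Fin k → ℕ) (b : ℕ) (hb : 0 < b)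
    {i₁ i₂ : Fin k} (hne : i₁ ≠ i₂) (h₁ : ¬ b ∣ a i₁) (h₂ : ¬ b ∣ a i₂) :
    ∑ i, Nat.gcd (a i) b + b ≤ k * b := by
  classical
  have hk2 : 2 ≤ k := by
    rcases k with _ | _ | k
    · exact i₁.elim0
    · exact absurd (Fin.ext (by omega : (i₁ : ℕ) = i₂)) hne
    · omega
  have hsub : ({i₁, i₂} : Finset (Fin k)) ⊆ univ := subset_univ _
  have hsplit : ∑ i ∈ univ \ ({i₁, i₂} : Finset (Fin k)), Nat.gcd (a i) b
      + ∑ i ∈ ({i₁, i₂} : Finset (Fin k)), Nat.gcd (a i) b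
      = ∑ i, Nat.gcd (a i) b := Finset.sum_sdiff hsub
  have hpair : ∑ i ∈ ({i₁, i₂} : Finset (Fin k)), Nat.gcd (a i) b
      = Nat.gcd (a i₁) b + Nat.gcd (a i₂) b := Finset.sum_pair hne
  have hrest : ∑ i ∈ univ \ ({i₁, i₂} : Finset (Fin k)), Nat.gcd (a i) b
      ≤ (k - 2) * b := by
    calc ∑ i ∈ univ \ ({i₁, i₂} : Finset (Fin k)), Nat.gcd (a i) b
        ≤ ∑ _i ∈ univ \ ({i₁, i₂} : Finset (Fin k)), b :=
          Finset.sum_le_sum fun i _ => Nat.gcd_le_right _ hb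
      _ = (k - 2) * b := by
          rw [Finset.sum_const, smul_eq_mul, Finset.card_sdiff_of_subset hsub,
            Finset.card_univ, Fintype.card_fin, Finset.card_pair hne]
  have h2g := two_mul_gcd_le hb h₁
  have h2g' := two_mul_gcd_le hb h₂
  have hkb : (k - 2) * b + b + b = k * b := by
    obtain ⟨k', rfl⟩ : ∃ k', k = k' + 2 := ⟨k - 2, by omega⟩
    simp [Nat.add_mul]; ring
  omega

/-- Upper bound for the gcd sum. -/
private lemma lemA {k : ℕ} (a : Fin k → ℕ) (b : ℕ) (hb : 0 < b) :
    ∑ i, Nat.gcd (a i) b + b ≤ k * b + Nat.gcd (∑ i, a i) b := by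
  by_cases h : ∀ i₁ i₂, ¬ b ∣ a i₁ → ¬ b ∣ a i₂ → i₁ = i₂
  · exact (lemC a b h).le
  · push_neg at h
    obtain ⟨i₁, i₂, h₁, h₂, hne⟩ := h
    exact le_trans (lemB a b hb hne h₁ h₂) (Nat.le_add_right _ _)

/-- Proposition 2.5: if `δ₀ = δ_max − s/2` with `0 ≤ s < r`, i.e.
`∑ᵢⱼ gcd(mᵢ,nⱼ) = (ℓ−1)rm + (k−1)rn + r − s`, then `s = 0`, `k = 1`, and `r`
divides every part `nⱼ`. -/
theorem prop_two_five
    (m n r k l s : ℕ) (hm : 0 < m) (hn : 0 < n) (hr : 0 < r)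
    (hmn : Nat.gcd m n = 1) (hmlen : m ≤ n) (hs : s < r)
    (a : Fin k → ℕ) (ha : ∀ i, 0 < a i) (hsa : ∑ i, a i = r * m)
    (b : Fin l → ℕ) (hb : ∀ j, 0 < b j) (hsb : ∑ j, b j = r * n)
    (hδ : ∑ i, ∑ j, Nat.gcd (a i) (b j)
        = (l - 1) * (r * m) + (k - 1) * (r * n) + (r - s)) :
    s = 0 ∧ k = 1 ∧ ∀ j, r ∣ b j := by
  classical
  have hA : 0 < r * m := Nat.mul_pos hr hm
  have hB : 0 < r * n := Nat.mul_pos hr hn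
  have hk0 : 0 < k := by
    rcases Nat.eq_zero_or_pos k with h | h
    · subst h; simp at hsa; omega
    · exact h
  have hl0 : 0 < l := by
    rcases Nat.eq_zero_or_pos l with h | h
    · subst h; simp at hsb; omega
    · exact h
  obtain ⟨K, rfl⟩ : ∃ K, k = K + 1 := ⟨k - 1, by omega⟩
  obtain ⟨L, rfl⟩ : ∃ L, l = L + 1 := ⟨l - 1, by omega⟩
  simp only [Nat.add_sub_cancel] at hδ
  -- gcd of the totals
  have hgBA : Nat.gcd (r * n) (r * m) = r := by
    rw [Nat.gcd_mul_left, Nat.gcd_comm, hmn, mul_one]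
  have hAleB : r * m ≤ r * n := Nat.mul_le_mul_left r hmlen
  have hflip : ∀ j, Nat.gcd (b j) (r * m) = Nat.gcd (r * m) (b j) :=
    fun j => Nat.gcd_comm _ _
  -- the key numerical hypothesis without truncated subtraction
  have key : ∑ i, ∑ j, Nat.gcd (a i) (b j) + s
      = L * (r * m) + K * (r * n) + r := by omega
  -- per-row bound
  have hrow : ∀ j, ∑ i, Nat.gcd (a i) (b j) + b j
      ≤ (K + 1) * b j + Nat.gcd (r * m) (b j) := by
    intro j
    have := lemA a (b j) (hb j)
    rwa [hsa] at this
  -- summed version of the per-row bound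
  have hrowsum : ∑ i, ∑ j, Nat.gcd (a i) (b j) + r * n
      ≤ (K + 1) * (r * n) + ∑ j, Nat.gcd (r * m) (b j) := by
    have h1 : ∑ j, (∑ i, Nat.gcd (a i) (b j) + b j)
        ≤ ∑ j, ((K + 1) * b j + Nat.gcd (r * m) (b j)) :=
      Finset.sum_le_sum fun j _ => hrow j
    rw [Finset.sum_add_distrib, Finset.sum_add_distrib, ← Finset.mul_sum,
      Finset.sum_comm, hsb] at h1
    exact h1
  -- at most one j with ¬ (r*m) ∣ b j
  have hexc : ∀ j₁ j₂, ¬ r * m ∣ b j₁ → ¬ r * m ∣ b j₂ → j₁ = j₂ := by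
    intro j₁ j₂ h₁ h₂
    by_contra hne
    have hcol := lemB b (r * m) hA hne h₁ h₂
    have hcol' : ∑ j, Nat.gcd (r * m) (b j) + r * m ≤ (L + 1) * (r * m) := by
      simp only [hflip] at hcol; exact hcol
    have e1 : (K + 1) * (r * n) = K * (r * n) + r * n := by ring
    have e2 : (L + 1) * (r * m) = L * (r * m) + r * m := by ring
    omega
  -- the column sum attains its maximum
  have hcolsum : ∑ j, Nat.gcd (r * m) (b j) + r * m = (L + 1) * (r * m) + r := by
    have := lemC b (r * m) hexc
    rw [hsb, hgBA] at this
    simp only [hflip] at this; exact this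
  -- each column gcd is A or r
  have hgj : ∀ j, Nat.gcd (r * m) (b j) = r * m ∨ Nat.gcd (r * m) (b j) = r := by
    intro j
    by_cases hd : r * m ∣ b j
    · left; exact Nat.gcd_eq_left hd
    · right
      have hrest : ∀ j' ∈ univ.erase j, r * m ∣ b j' := by
        intro j' hj'
        by_contra hc
        exact (Finset.ne_of_mem_erase hj') (hexc j' j hc hd)
      obtain ⟨t, ht⟩ : r * m ∣ ∑ j' ∈ univ.erase j, b j' := dvd_sum hrest
      have hsplit : b j + ∑ j' ∈ univ.erase j, b j' = ∑ j', b j' :=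
        Finset.add_sum_erase _ _ (mem_univ j)
      have : Nat.gcd (∑ j', b j') (r * m) = Nat.gcd (b j) (r * m) := by
        rw [← hsplit, ht, mul_comm (r * m) t, Nat.gcd_add_mul_right_left]
      rw [hsb, hgBA] at this
      rw [Nat.gcd_comm]; exact this.symm
  have hgr : ∀ j, r ≤ Nat.gcd (r * m) (b j) := by
    intro j
    rcases hgj j with h | h
    · rw [h]; exact Nat.le_mul_of_pos_right r hm
    · omega
  -- each row attains its maximum: at most one i with ¬ b j ∣ a i
  have hH2 : ∀ j i₁ i₂, ¬ b j ∣ a i₁ → ¬ b j ∣ a i₂ → i₁ = i₂ := by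
    intro j i₁ i₂ h₁ h₂
    by_contra hne
    have hbad := lemB a (b j) (hb j) hne h₁ h₂
    -- split the summed row bound at j
    have hsplit : (∑ i, Nat.gcd (a i) (b j) + b j)
        + ∑ j' ∈ univ.erase j, (∑ i, Nat.gcd (a i) (b j') + b j')
        = ∑ i, ∑ j', Nat.gcd (a i) (b j') + r * n := by
      rw [Finset.add_sum_erase _ (fun j' => ∑ i, Nat.gcd (a i) (b j') + b j')
        (mem_univ j), Finset.sum_add_distrib, Finset.sum_comm, hsb]
    have hothers : ∑ j' ∈ univ.erase j, (∑ i, Nat.gcd (a i) (b j') + b j')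
        ≤ ∑ j' ∈ univ.erase j, ((K + 1) * b j' + Nat.gcd (r * m) (b j')) :=
      Finset.sum_le_sum fun j' _ => hrow j'
    have hall : ((K + 1) * b j + Nat.gcd (r * m) (b j))
        + ∑ j' ∈ univ.erase j, ((K + 1) * b j' + Nat.gcd (r * m) (b j'))
        = (K + 1) * (r * n) + ∑ j', Nat.gcd (r * m) (b j') := by
      rw [Finset.add_sum_erase _ (fun j' => (K + 1) * b j' + Nat.gcd (r * m) (b j'))
        (mem_univ j), Finset.sum_add_distrib, ← Finset.mul_sum, hsb]
    have hgrj := hgr j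
    have e1 : (K + 1) * (r * n) = K * (r * n) + r * n := by ring
    have e2 : (L + 1) * (r * m) = L * (r * m) + r * m := by ring
    omega
  -- every row equality
  have hroweq : ∀ j, ∑ i, Nat.gcd (a i) (b j) + b j
      = (K + 1) * b j + Nat.gcd (r * m) (b j) := by
    intro j
    have := lemC a (b j) (hH2 j)
    rwa [hsa] at this
  have hroweqsum : ∑ i, ∑ j, Nat.gcd (a i) (b j) + r * n
      = (K + 1) * (r * n) + ∑ j, Nat.gcd (r * m) (b j) := by
    have h1 : ∑ j, (∑ i, Nat.gcd (a i) (b j) + b j)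
        = ∑ j, ((K + 1) * b j + Nat.gcd (r * m) (b j)) :=
      Finset.sum_congr rfl fun j _ => hroweq j
    rw [Finset.sum_add_distrib, Finset.sum_add_distrib, ← Finset.mul_sum,
      Finset.sum_comm, hsb] at h1
    exact h1
  -- s = 0
  have hs0 : s = 0 := by
    have e1 : (K + 1) * (r * n) = K * (r * n) + r * n := by ring
    have e2 : (L + 1) * (r * m) = L * (r * m) + r * m := by ring
    omega
  -- k = 1
  have hK0 : K = 0 := by
    by_contra hK
    obtain ⟨K', rfl⟩ : ∃ K', K = K' + 1 := ⟨K - 1, by omega⟩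
    -- find j with r * m ≤ b j
    obtain ⟨j, hjA⟩ : ∃ j, r * m ≤ b j := by
      by_cases hd : ∃ j, r * m ∣ b j
      · obtain ⟨j, hj⟩ := hd
        exact ⟨j, Nat.le_of_dvd (hb j) hj⟩
      · push_neg at hd
        rcases L with _ | L
        · refine ⟨0, ?_⟩
          have : ∑ j', b j' = b 0 := by simp
          rw [this] at hsb
          omega
        · exact absurd (hexc 0 1 (hd 0) (hd 1)) (by simp [Fin.ext_iff])
    -- find i with b j ∣ a i
    obtain ⟨i, hi⟩ : ∃ i, b j ∣ a i := by
      by_contra hc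
      push_neg at hc
      exact absurd (hH2 j 0 1 (hc 0) (hc 1)) (by simp [Fin.ext_iff])
    have hile : b j ≤ a i := Nat.le_of_dvd (ha i) hi
    -- find i' ≠ i
    obtain ⟨i', hii'⟩ : ∃ i' : Fin (K' + 2), i' ≠ i := by
      by_cases h0 : i = 0
      · exact ⟨1, by simp [h0, Fin.ext_iff]⟩
      · exact ⟨0, fun h => h0 h.symm⟩
    have hpair : a i' + a i ≤ ∑ i'', a i'' := by
      have hsub : ({i', i} : Finset (Fin (K' + 2))) ⊆ univ := subset_univ _
      have := Finset.sum_le_sum_of_subset (f := a) hsub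
      rwa [Finset.sum_pair hii'] at this
    have := ha i'
    omega
  refine ⟨hs0, by omega, ?_⟩
  intro j
  rcases hgj j with h | h
  · have : r * m ∣ b j := by rw [← h]; exact Nat.gcd_dvd_right _ _
    exact dvd_trans (Dvd.intro m rfl) this
  · rw [← h]; exact Nat.gcd_dvd_right _ _
end

section
/- Let m ≤ n be coprime positive integers and r a positive integer. Let m₁, m₂, m₃ be positive integers with m₁+m₂+m₃ = rm and n₁, n₂, n₃ positive integers with n₁+n₂+n₃ = rn, and suppose gcd(m₁, m₂, m₃, n₁, n₂, n₃, r) = 1 and Σ_{i=1}^{3} Σ_{j=1}^{3} gcd(m_i, n_j) = 2rm + 2rn − r (i.e. δ_∞ = δ_max − r with k = ℓ = 3). Then (rm, rn) = (3,3), and moreover every part m_i and n_j equals 1. -/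
/-- Proposition 2.9: if `δ_∞ = δ_max − r` with `k = ℓ = 3` and the parts
together with `r` have no common divisor, then the bidegree is `(3,3)` and all
parts equal `1`. -/
theorem prop_two_nine
    (m n r m₁ m₂ m₃ n₁ n₂ n₃ : ℕ) (hm : 0 < m) (hn : 0 < n) (hr : 0 < r)
    (hmn : Nat.gcd m n = 1) (hmlen : m ≤ n)
    (hm₁ : 0 < m₁) (hm₂ : 0 < m₂) (hm₃ : 0 < m₃)
    (hn₁ : 0 < n₁) (hn₂ : 0 < n₂) (hn₃ : 0 < n₃)
    (hsm : m₁ + m₂ + m₃ = r * m) (hsn : n₁ + n₂ + n₃ = r * n)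
    (hcop : Nat.gcd m₁ (Nat.gcd m₂ (Nat.gcd m₃
        (Nat.gcd n₁ (Nat.gcd n₂ (Nat.gcd n₃ r))))) = 1)
    (hδ : Nat.gcd m₁ n₁ + Nat.gcd m₁ n₂ + Nat.gcd m₁ n₃
        + Nat.gcd m₂ n₁ + Nat.gcd m₂ n₂ + Nat.gcd m₂ n₃
        + Nat.gcd m₃ n₁ + Nat.gcd m₃ n₂ + Nat.gcd m₃ n₃ + r
        = 2 * (r * m) + 2 * (r * n)) :
    r * m = 3 ∧ r * n = 3 ∧
      m₁ = 1 ∧ m₂ = 1 ∧ m₃ = 1 ∧ n₁ = 1 ∧ n₂ = 1 ∧ n₃ = 1 := by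
  -- bounds gcd ≤ left argument
  have a11 : Nat.gcd m₁ n₁ ≤ m₁ := Nat.gcd_le_left _ hm₁
  have a12 : Nat.gcd m₁ n₂ ≤ m₁ := Nat.gcd_le_left _ hm₁
  have a13 : Nat.gcd m₁ n₃ ≤ m₁ := Nat.gcd_le_left _ hm₁
  have a21 : Nat.gcd m₂ n₁ ≤ m₂ := Nat.gcd_le_left _ hm₂
  have a22 : Nat.gcd m₂ n₂ ≤ m₂ := Nat.gcd_le_left _ hm₂
  have a23 : Nat.gcd m₂ n₃ ≤ m₂ := Nat.gcd_le_left _ hm₂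
  have a31 : Nat.gcd m₃ n₁ ≤ m₃ := Nat.gcd_le_left _ hm₃
  have a32 : Nat.gcd m₃ n₂ ≤ m₃ := Nat.gcd_le_left _ hm₃
  have a33 : Nat.gcd m₃ n₃ ≤ m₃ := Nat.gcd_le_left _ hm₃
  have b11 : Nat.gcd m₁ n₁ ≤ n₁ := Nat.gcd_le_right _ hn₁
  have b12 : Nat.gcd m₁ n₂ ≤ n₂ := Nat.gcd_le_right _ hn₂
  have b13 : Nat.gcd m₁ n₃ ≤ n₃ := Nat.gcd_le_right _ hn₃
  have b21 : Nat.gcd m₂ n₁ ≤ n₁ := Nat.gcd_le_right _ hn₁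
  have b22 : Nat.gcd m₂ n₂ ≤ n₂ := Nat.gcd_le_right _ hn₂
  have b23 : Nat.gcd m₂ n₃ ≤ n₃ := Nat.gcd_le_right _ hn₃
  have b31 : Nat.gcd m₃ n₁ ≤ n₁ := Nat.gcd_le_right _ hn₁
  have b32 : Nat.gcd m₃ n₂ ≤ n₂ := Nat.gcd_le_right _ hn₂
  have b33 : Nat.gcd m₃ n₃ ≤ n₃ := Nat.gcd_le_right _ hn₃
  -- 2 r n ≤ r m + r
  have key : r * (2 * n) ≤ r * (m + 1) := by
    rw [show r * (2 * n) = 2 * (r * n) from by ring,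
      show r * (m + 1) = r * m + r from by ring]
    omega
  have hkey : 2 * n ≤ m + 1 := Nat.le_of_mul_le_mul_left key hr
  have hn1 : n = 1 := by omega
  have hm1 : m = 1 := by omega
  subst hn1 hm1
  simp only [mul_one] at hsm hsn hδ ⊢
  -- now equality forces everything equal
  have e1 : m₁ = n₁ := by omega
  have e2 : m₂ = m₁ := by omega
  have e3 : m₃ = m₁ := by omega
  have e4 : n₂ = m₁ := by omega
  have e5 : n₃ = m₁ := by omega
  have er : r = 3 * m₁ := by omega
  subst e1 e2 e3 e4 e5
  rw [er] at hcop
  rw [Nat.gcd_eq_left (dvd_mul_left _ 3)] at hcop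
  simp only [Nat.gcd_self] at hcop
  omega
end

section
/- Let m ≤ n be coprime positive integers and r a positive integer. Let m₁, m₂ be positive integers with m₁+m₂ = rm and n₁, n₂, n₃, n₄ positive integers with n₁+n₂+n₃+n₄ = rn, and suppose gcd(m₁, m₂, n₁, n₂, n₃, n₄, r) = 1 and Σ_{i=1}^{2} Σ_{j=1}^{4} gcd(m_i, n_j) = 3rm + rn − r (i.e. δ_∞ = δ_max − r with k = 2, ℓ = 4). Then (rm, rn) = (2,4). -/
/-- Proposition 2.11: if `δ_∞ = δ_max − r` with `k = 2`, `ℓ = 4` and the parts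
together with `r` have no common divisor, then `(rm, rn) = (2,4)`. -/
theorem prop_two_eleven
    (m n r m₁ m₂ n₁ n₂ n₃ n₄ : ℕ) (hm : 0 < m) (hn : 0 < n) (hr : 0 < r)
    (hmn : Nat.gcd m n = 1) (hmlen : m ≤ n)
    (hm₁ : 0 < m₁) (hm₂ : 0 < m₂)
    (hn₁ : 0 < n₁) (hn₂ : 0 < n₂) (hn₃ : 0 < n₃) (hn₄ : 0 < n₄)
    (hsm : m₁ + m₂ = r * m) (hsn : n₁ + n₂ + n₃ + n₄ = r * n)
    (hcop : Nat.gcd m₁ (Nat.gcd m₂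
        (Nat.gcd n₁ (Nat.gcd n₂ (Nat.gcd n₃ (Nat.gcd n₄ r))))) = 1)
    (hδ : Nat.gcd m₁ n₁ + Nat.gcd m₁ n₂ + Nat.gcd m₁ n₃ + Nat.gcd m₁ n₄
        + Nat.gcd m₂ n₁ + Nat.gcd m₂ n₂ + Nat.gcd m₂ n₃ + Nat.gcd m₂ n₄ + r
        = 3 * (r * m) + r * n) :
    r * m = 2 ∧ r * n = 4 := by
  have a11 : Nat.gcd m₁ n₁ ≤ m₁ := Nat.gcd_le_left _ hm₁
  have a12 : Nat.gcd m₁ n₂ ≤ m₁ := Nat.gcd_le_left _ hm₁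
  have a13 : Nat.gcd m₁ n₃ ≤ m₁ := Nat.gcd_le_left _ hm₁
  have a14 : Nat.gcd m₁ n₄ ≤ m₁ := Nat.gcd_le_left _ hm₁
  have a21 : Nat.gcd m₂ n₁ ≤ m₂ := Nat.gcd_le_left _ hm₂
  have a22 : Nat.gcd m₂ n₂ ≤ m₂ := Nat.gcd_le_left _ hm₂
  have a23 : Nat.gcd m₂ n₃ ≤ m₂ := Nat.gcd_le_left _ hm₂
  have a24 : Nat.gcd m₂ n₄ ≤ m₂ := Nat.gcd_le_left _ hm₂
  have b11 : Nat.gcd m₁ n₁ ≤ n₁ := Nat.gcd_le_right _ hn₁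
  have b12 : Nat.gcd m₁ n₂ ≤ n₂ := Nat.gcd_le_right _ hn₂
  have b13 : Nat.gcd m₁ n₃ ≤ n₃ := Nat.gcd_le_right _ hn₃
  have b14 : Nat.gcd m₁ n₄ ≤ n₄ := Nat.gcd_le_right _ hn₄
  have b21 : Nat.gcd m₂ n₁ ≤ n₁ := Nat.gcd_le_right _ hn₁
  have b22 : Nat.gcd m₂ n₂ ≤ n₂ := Nat.gcd_le_right _ hn₂
  have b23 : Nat.gcd m₂ n₃ ≤ n₃ := Nat.gcd_le_right _ hn₃
  have b24 : Nat.gcd m₂ n₄ ≤ n₄ := Nat.gcd_le_right _ hn₄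
  -- first derive m = 1, n = 2
  have h1 : r * n ≤ r * (m + 1) := by
    have : r * (m + 1) = r * m + r := by ring
    omega
  have h2 : r * (3 * m) ≤ r * (n + 1) := by
    have e1 : r * (3 * m) = 3 * (r * m) := by ring
    have e2 : r * (n + 1) = r * n + r := by ring
    omega
  have hn1 : n ≤ m + 1 := Nat.le_of_mul_le_mul_left h1 hr
  have hm3 : 3 * m ≤ n + 1 := Nat.le_of_mul_le_mul_left h2 hr
  have hm1 : m = 1 := by omega
  have hn2 : n = 2 := by omega
  subst hm1 hn2
  have hrm : r * 1 = r := by ring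
  have hrn : r * 2 = r + r := by ring
  -- equality forces each gcd to equal both arguments
  have e11 : Nat.gcd m₁ n₁ = m₁ ∧ Nat.gcd m₁ n₁ = n₁ := by omega
  have e12 : Nat.gcd m₁ n₂ = m₁ ∧ Nat.gcd m₁ n₂ = n₂ := by omega
  have e13 : Nat.gcd m₁ n₃ = m₁ ∧ Nat.gcd m₁ n₃ = n₃ := by omega
  have e14 : Nat.gcd m₁ n₄ = m₁ ∧ Nat.gcd m₁ n₄ = n₄ := by omega
  have e21 : Nat.gcd m₂ n₁ = m₂ ∧ Nat.gcd m₂ n₁ = n₁ := by omega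
  have q1 : n₁ = m₁ := by omega
  have q2 : n₂ = m₁ := by omega
  have q3 : n₃ = m₁ := by omega
  have q4 : n₄ = m₁ := by omega
  have q5 : m₂ = m₁ := by omega
  subst q1 q2 q3 q4 q5
  have hrval : r = m₂ + m₂ := by omega
  have hdvd : m₂ ∣ Nat.gcd m₂ (Nat.gcd m₂
      (Nat.gcd m₂ (Nat.gcd m₂ (Nat.gcd m₂ (Nat.gcd m₂ r))))) := by
    have hdr : m₂ ∣ r := ⟨2, by omega⟩
    exact Nat.dvd_gcd dvd_rfl (Nat.dvd_gcd dvd_rfl (Nat.dvd_gcd dvd_rfl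
      (Nat.dvd_gcd dvd_rfl (Nat.dvd_gcd dvd_rfl (Nat.dvd_gcd dvd_rfl hdr)))))
  rw [hcop] at hdvd
  have : m₂ = 1 := Nat.eq_one_of_dvd_one hdvd
  omega
end

section
/- Let m ≤ n be coprime positive integers and r a positive integer. Let m₁, m₂ be positive integers with m₁ + m₂ = rm, and suppose gcd(m₁, m₂, rn, r) = 1 and gcd(m₁, rn) + gcd(m₂, rn) = rn − r (i.e. δ_∞ = δ_max − r with k = 2 and ℓ = 1, the single part of the second partition being n₁ = rn). Then (rm, rn) ∈ {(2,3), (2,4), (3,4), (3,6), (4,6), (5,6)}. -/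
private lemma abc_bound' (a b c : ℕ) (hb : 2 ≤ b) (hc : 2 ≤ c)
    (h : b*c + a*c + a*b = a*b*c) : a ≤ 6 := by
  by_contra hlt
  push_neg at hlt
  rcases Nat.lt_or_ge b 7 with hb7 | hb7
  · rcases Nat.lt_or_ge c 7 with hc7 | hc7
    · interval_cases b <;> interval_cases c <;> omega
    · nlinarith [Nat.mul_le_mul_left (a*b) hc7, Nat.mul_le_mul_left (a*c) hb,
        Nat.mul_le_mul_left (b*c) (le_of_lt hlt)]
  · nlinarith [Nat.mul_le_mul_left (a*b) hc, Nat.mul_le_mul_left (a*c) hb7,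
      Nat.mul_le_mul_left (b*c) (le_of_lt hlt)]

private lemma lcm_bound' : ∀ a ∈ Finset.range 7, ∀ b ∈ Finset.range 7, ∀ c ∈ Finset.range 7,
    2 ≤ a → 2 ≤ b → 2 ≤ c → b*c + a*c + a*b = a*b*c → Nat.lcm a (Nat.lcm b c) ≤ 6 := by
  decide

private lemma final_check' : ∀ N ∈ Finset.range 7, ∀ r ∈ Finset.range 7,
    ∀ a ∈ Finset.range 7, ∀ b ∈ Finset.range 7,
    (0 < r ∧ r ∣ N ∧ 2 * r ≤ N ∧ 0 < a ∧ 0 < b ∧ a + b + r = N ∧ a ∣ N ∧ b ∣ N ∧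
    Nat.gcd a (Nat.gcd b r) = 1) →
    ((N - r = 2 ∧ N = 3) ∨ (N - r = 2 ∧ N = 4) ∨ (N - r = 3 ∧ N = 4) ∨
     (N - r = 3 ∧ N = 6) ∨ (N - r = 4 ∧ N = 6) ∨ (N - r = 5 ∧ N = 6)) := by
  decide

set_option maxHeartbeats 1000000 in
/-- Proposition 2.12: if `δ_∞ = δ_max − r` with `k = 2`, `ℓ = 1` (the single
part of the second partition being `rn`) and `gcd(m₁, m₂, rn, r) = 1`, then
`(rm, rn) ∈ {(2,3), (2,4), (3,4), (3,6), (4,6), (5,6)}`. -/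
theorem prop_two_twelve
    (m n r m₁ m₂ : ℕ) (hm : 0 < m) (hn : 0 < n) (hr : 0 < r)
    (hmn : Nat.gcd m n = 1) (hmlen : m ≤ n)
    (hm₁ : 0 < m₁) (hm₂ : 0 < m₂)
    (hsm : m₁ + m₂ = r * m)
    (hcop : Nat.gcd m₁ (Nat.gcd m₂ (Nat.gcd (r * n) r)) = 1)
    (hδ : Nat.gcd m₁ (r * n) + Nat.gcd m₂ (r * n) + r = r * n) :
    (r * m, r * n) ∈
      ({(2, 3), (2, 4), (3, 4), (3, 6), (4, 6), (5, 6)} : Set (ℕ × ℕ)) := by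
  have hg1le : Nat.gcd m₁ (r * n) ≤ m₁ := Nat.gcd_le_left _ hm₁
  have hg2le : Nat.gcd m₂ (r * n) ≤ m₂ := Nat.gcd_le_left _ hm₂
  have hg1pos : 0 < Nat.gcd m₁ (r * n) := Nat.gcd_pos_of_pos_left _ hm₁
  -- n = m + 1
  have hnm : n = m + 1 := by
    have key : r * n ≤ r * (m + 1) := by
      have h' : r * (m + 1) = r * m + r := by ring
      omega
    have hle : n ≤ m + 1 := Nat.le_of_mul_le_mul_left key hr
    rcases (by omega : m = n ∨ n = m + 1) with h | h
    · exfalso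
      subst h
      rw [Nat.gcd_self] at hmn
      subst hmn
      simp only [mul_one] at hδ hg1pos
      omega
    · exact h
  have hn2 : 2 ≤ n := by omega
  have hrn : r * n = r * m + r := by rw [hnm]; ring
  -- m₁ and m₂ divide N := r * n
  have hg1 : Nat.gcd m₁ (r * n) = m₁ := by omega
  have hg2 : Nat.gcd m₂ (r * n) = m₂ := by omega
  have hm₁N : m₁ ∣ r * n := hg1 ▸ Nat.gcd_dvd_right m₁ (r * n)
  have hm₂N : m₂ ∣ r * n := hg2 ▸ Nat.gcd_dvd_right m₂ (r * n)
  have hrN : r ∣ r * n := dvd_mul_right r n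
  -- simplify coprimality
  have hgcdrnr : Nat.gcd (r * n) r = r := Nat.gcd_eq_right hrN
  rw [hgcdrnr] at hcop
  -- set up unit fractions
  have hNpos : 0 < r * n := Nat.mul_pos hr hn
  set a := r * n / m₁ with hadef
  set b := r * n / m₂ with hbdef
  have ha : m₁ * a = r * n := Nat.mul_div_cancel' hm₁N
  have hb : m₂ * b = r * n := Nat.mul_div_cancel' hm₂N
  have hsumN : m₁ + m₂ + r = r * n := by omega
  have hm₁lt : m₁ < r * n := by omega
  have hm₂lt : m₂ < r * n := by omega
  have ha2 : 2 ≤ a := by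
    by_contra hcon
    push_neg at hcon
    have h' : m₁ * a ≤ m₁ * 1 := Nat.mul_le_mul_left _ (by omega)
    rw [mul_one] at h'
    omega
  have hb2 : 2 ≤ b := by
    by_contra hcon
    push_neg at hcon
    have h' : m₂ * b ≤ m₂ * 1 := Nat.mul_le_mul_left _ (by omega)
    rw [mul_one] at h'
    omega
  -- the equation b*n + a*n + a*b = a*b*n
  have heq : b * n + a * n + a * b = a * b * n := by
    apply Nat.eq_of_mul_eq_mul_left hNpos
    calc r * n * (b * n + a * n + a * b)
        = (m₁ * a) * (b * n) + (m₂ * b) * (a * n) + (r * n) * (a * b) := by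
          rw [ha, hb]; ring
      _ = (m₁ + m₂ + r) * (a * b * n) := by ring
      _ = r * n * (a * b * n) := by rw [hsumN]
  -- N = lcm a (lcm b n)
  have haN : a ∣ r * n := ⟨m₁, by rw [← ha]; ring⟩
  have hbN : b ∣ r * n := ⟨m₂, by rw [← hb]; ring⟩
  have hcN : n ∣ r * n := dvd_mul_left n r
  have hLN : Nat.lcm a (Nat.lcm b n) ∣ r * n := Nat.lcm_dvd haN (Nat.lcm_dvd hbN hcN)
  set L := Nat.lcm a (Nat.lcm b n) with hLdef
  have hj : L * (r * n / L) = r * n := Nat.mul_div_cancel' hLN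
  set j := r * n / L with hjdef
  have hdvd_aux : ∀ x d : ℕ, 2 ≤ d → d ∣ L → x * d = r * n → j ∣ x := by
    intro x d hd2 hdL hx
    obtain ⟨k, hk⟩ := hdL
    have h1 : d * (k * j) = d * x := by
      calc d * (k * j) = (d * k) * j := by ring
        _ = L * j := by rw [hk]
        _ = r * n := hj
        _ = x * d := hx.symm
        _ = d * x := by ring
    have h2 : k * j = x := Nat.eq_of_mul_eq_mul_left (by omega) h1
    exact ⟨k, by rw [← h2]; ring⟩
  have hja : j ∣ m₁ := hdvd_aux m₁ a ha2 (Nat.dvd_lcm_left _ _) ha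
  have hjb : j ∣ m₂ :=
    hdvd_aux m₂ b hb2 ((Nat.dvd_lcm_left b n).trans (Nat.dvd_lcm_right a (Nat.lcm b n))) hb
  have hjr : j ∣ r := hdvd_aux r n hn2 ((Nat.dvd_lcm_right b n).trans (Nat.dvd_lcm_right a (Nat.lcm b n))) (by rw [mul_comm])
  have hj1 : j = 1 := Nat.dvd_one.mp (hcop ▸ Nat.dvd_gcd hja (Nat.dvd_gcd hjb hjr))
  have hNL : r * n = L := by rw [← hj, hj1, mul_one]
  -- bound a, b, n ≤ 6
  have ha6 : a ≤ 6 := abc_bound' a b n hb2 hn2 heq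
  have hb6 : b ≤ 6 := by
    apply abc_bound' b a n ha2 hn2
    rw [show b*a*n = a*b*n by ring, show a*n + b*n + b*a = b*n + a*n + a*b by ring]
    exact heq
  have hn6 : n ≤ 6 := by
    apply abc_bound' n a b ha2 hb2
    rw [show n*a*b = a*b*n by ring, show a*b + n*b + n*a = b*n + a*n + a*b by ring]
    exact heq
  -- N ≤ 6
  have hN6 : r * n ≤ 6 := by
    rw [hNL]
    exact lcm_bound' a (Finset.mem_range.mpr (by omega)) b (Finset.mem_range.mpr (by omega))
      n (Finset.mem_range.mpr (by omega)) ha2 hb2 hn2 heq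
  -- final check
  have hrlt : r < 7 := by omega
  have h2r : 2 * r ≤ r * n := by rw [mul_comm]; exact Nat.mul_le_mul_left r hn2
  have D := final_check' (r * n) (Finset.mem_range.mpr (by omega))
    r (Finset.mem_range.mpr (by omega))
    m₁ (Finset.mem_range.mpr (by omega))
    m₂ (Finset.mem_range.mpr (by omega))
    ⟨hr, hrN, h2r, hm₁, hm₂, hsumN, hm₁N, hm₂N, hcop⟩
  simp only [Set.mem_insert_iff, Set.mem_singleton_iff, Prod.mk.injEq]
  obtain ⟨A, hA⟩ : ∃ A, r * m = A := ⟨_, rfl⟩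
  obtain ⟨B, hB⟩ : ∃ B, r * n = B := ⟨_, rfl⟩
  rw [hA] at hrn ⊢
  rw [hB] at hrn D ⊢
  omega
end

section
/- Let m ≤ n be coprime positive integers and let n₁,…,n_ℓ be positive integers with n₁+⋯+n_ℓ = n satisfying (ℓ−1)·m − 1 = Σ_{j=1}^{ℓ} gcd(m, n_j) (i.e. δ_∞ = δ_max − 1 with r = 1 and k = 1, the single part of the first partition being m₁ = m). Then m ∈ {2, 3, 4, 6}. -/
lemma two_mul_le_of_dvd_lt {d m : ℕ} (h : d ∣ m) (hlt : d < m) : 2 * d ≤ m := by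
  obtain ⟨k, rfl⟩ := h
  rcases k with _ | _ | k
  · omega
  · omega
  · nlinarith

lemma key_divisor_lemma {a c m : ℕ} (ha : a ∣ m) (hc : c ∣ m)
    (hsum : a + c + 1 = m) (h2a : 2 * a ≤ m) (h2c : 2 * c ≤ m)
    (hap : 0 < a) (hcp : 0 < c) : m = 3 ∨ m = 4 ∨ m = 6 := by
  have hcase : 2 * a = m ∨ 2 * a = m - 1 ∨ 2 * a = m - 2 := by omega
  rcases hcase with h | h | h
  · -- c = a - 1, c ∣ 2c + 2 ⇒ c ∣ 2
    have hm2c : m = 2 * c + 2 := by omega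
    have hc2 : c ∣ 2 := by
      have h1 : c ∣ 2 * c + 2 := hm2c ▸ hc
      have h2 : c ∣ 2 * c := dvd_mul_left c 2
      have := Nat.dvd_sub h1 h2
      simpa using this
    have := Nat.le_of_dvd (by norm_num) hc2
    omega
  · -- a ∣ m and a ∣ m - 1 ⇒ a = 1 ⇒ m = 3
    have h1 : a ∣ m - 1 := h ▸ dvd_mul_left a 2
    have h2 : a ∣ 1 := by
      have := Nat.dvd_sub ha h1
      have hm1 : m - (m - 1) = 1 := by omega
      rwa [hm1] at this
    have := Nat.le_of_dvd (by norm_num) h2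
    omega
  · -- a ∣ m and a ∣ m - 2 ⇒ a ∣ 2
    have h1 : a ∣ m - 2 := h ▸ dvd_mul_left a 2
    have h2 : a ∣ 2 := by
      have := Nat.dvd_sub ha h1
      have hm1 : m - (m - 2) = 2 := by omega
      rwa [hm1] at this
    have := Nat.le_of_dvd (by norm_num) h2
    omega

/-- Proposition 2.14: if `m ≤ n` are coprime and a partition `n₁,…,n_ℓ` of `n`
into positive parts satisfies `(ℓ−1)m − 1 = ∑ⱼ gcd(m, nⱼ)`, then
`m ∈ {2, 3, 4, 6}`. -/
theorem prop_two_fourteen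
    (m n l : ℕ) (hm : 0 < m) (hn : 0 < n)
    (hmn : Nat.gcd m n = 1) (hmlen : m ≤ n)
    (b : Fin l → ℕ) (hb : ∀ j, 0 < b j) (hsb : ∑ j, b j = n)
    (hδ : ∑ j, Nat.gcd m (b j) + 1 = (l - 1) * m) :
    m ∈ ({2, 3, 4, 6} : Set ℕ) := by
  classical
  have hd_pos : ∀ j, 0 < Nat.gcd m (b j) := fun j => Nat.gcd_pos_of_pos_left _ hm
  have hd_dvd : ∀ j, Nat.gcd m (b j) ∣ m := fun j => Nat.gcd_dvd_left _ _
  have hd_le : ∀ j, Nat.gcd m (b j) ≤ m := fun j => Nat.le_of_dvd hm (hd_dvd j)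
  -- l ≥ 2
  have hl : 2 ≤ l := by
    by_contra h
    push_neg at h
    interval_cases l
    · simp at hδ
    · rw [Fin.sum_univ_one] at hδ
      have := hd_pos 0
      omega
  -- ∑ (m - d j) = m + 1
  have hconst : ∑ _j : Fin l, m = l * m := by
    rw [Finset.sum_const, Finset.card_univ, Fintype.card_fin, smul_eq_mul]
  have h1 : ∑ j, (m - Nat.gcd m (b j)) + ∑ j, Nat.gcd m (b j) = l * m := by
    rw [← Finset.sum_add_distrib, ← hconst]
    exact Finset.sum_congr rfl fun j _ => Nat.sub_add_cancel (hd_le j)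
  have hlm : (l - 1) * m + m = l * m := by
    have hle : m ≤ l * m := Nat.le_mul_of_pos_left m (by omega)
    rw [Nat.sub_one_mul, Nat.sub_add_cancel hle]
  have hsum : ∑ j, (m - Nat.gcd m (b j)) = m + 1 := by omega
  -- m ≥ 2
  have hm2 : 2 ≤ m := by
    by_contra h
    have hm1 : m = 1 := by omega
    subst hm1
    simp [Nat.gcd_one_left] at hsum
  -- the set of indices with proper gcd
  set T : Finset (Fin l) := Finset.univ.filter (fun j => Nat.gcd m (b j) < m) with hT
  have hTsum : ∑ j ∈ T, (m - Nat.gcd m (b j)) = m + 1 := by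
    rw [hT, Finset.sum_filter_of_ne, hsum]
    intro j _ hne
    have := hd_le j
    omega
  have hTbig : ∀ j ∈ T, m ≤ 2 * (m - Nat.gcd m (b j)) := by
    intro j hj
    rw [hT, Finset.mem_filter] at hj
    have := two_mul_le_of_dvd_lt (hd_dvd j) hj.2
    omega
  have hcard : T.card * m ≤ 2 * (m + 1) := by
    have h := Finset.card_nsmul_le_sum T _ m hTbig
    rw [smul_eq_mul, ← Finset.mul_sum, hTsum] at h
    exact h
  -- m = 2 case done; otherwise T.card ≤ 2
  rcases Nat.lt_or_ge m 3 with hm3 | hm3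
  · have : m = 2 := by omega
    simp [this]
  have hTle : T.card ≤ 2 := by
    by_contra h
    push_neg at h
    have : 3 * m ≤ T.card * m := Nat.mul_le_mul_right m (by omega)
    omega
  have hTge : 1 ≤ T.card := by
    rcases Nat.eq_zero_or_pos T.card with h0 | h1
    · rw [Finset.card_eq_zero] at h0
      rw [h0, Finset.sum_empty] at hTsum
      omega
    · exact h1
  have hTc : T.card = 1 ∨ T.card = 2 := by omega
  rcases hTc with h1c | h2c
  · -- one term equal to m+1: impossible
    obtain ⟨a, ha⟩ := Finset.card_eq_one.mp h1c
    rw [ha, Finset.sum_singleton] at hTsum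
    have := hd_pos a
    omega
  · obtain ⟨a, c, hac, hT2⟩ := Finset.card_eq_two.mp h2c
    rw [hT2, Finset.sum_pair hac] at hTsum
    have haT : a ∈ T := by rw [hT2]; simp
    have hcT : c ∈ T := by rw [hT2]; simp
    rw [hT, Finset.mem_filter] at haT hcT
    have h2a := two_mul_le_of_dvd_lt (hd_dvd a) haT.2
    have h2c := two_mul_le_of_dvd_lt (hd_dvd c) hcT.2
    have hsum2 : Nat.gcd m (b a) + Nat.gcd m (b c) + 1 = m := by
      have := hd_le a; have := hd_le c; omega
    have := key_divisor_lemma (hd_dvd a) (hd_dvd c) hsum2 h2a h2c (hd_pos a) (hd_pos c)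
    rcases this with h | h | h <;> simp [h]
end

section
/- Let m ≤ n be coprime positive integers, let r > 1 be an integer, and let n₁,…,n_ℓ be positive integers with n₁+⋯+n_ℓ = rn satisfying gcd(rm, n₁, …, n_ℓ, r) = 1 and (ℓ−1)·rm − r = Σ_{j=1}^{ℓ} gcd(rm, n_j) (i.e. δ_∞ = δ_max − r with k = 1, the single part of the first partition being m₁ = rm). Then the bidegree (rm, rn) has one of the following forms, for positive integers n and s: (2, 2n), (3, 3n), (4, 4n), (4, 4s+2), (6, 6n), (6, 6s+2), (6, 6s+3), (6, 6s+4). In particular rm ∈ {2, 3, 4, 6}. -/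
section Prop216Aux

private lemma core2 (M r m d1 d2 : ℕ) (hr : 2 ≤ r) (hm : 1 ≤ m) (hM : M = r * m)
    (h1 : 1 ≤ d1) (h12 : d1 ≤ d2)
    (hd1M : d1 ∣ M) (hd2M : d2 ∣ M) (ha : 2 * d1 ≤ M) (hb : 2 * d2 ≤ M)
    (hsum : d1 + d2 + r = M)
    (hco : ∀ v, v ∣ d1 → v ∣ d2 → v ∣ r → v = 1) :
    (M = 6 ∧ r = 2 ∧ m = 3) ∨ (M = 6 ∧ r = 3 ∧ m = 2) ∨ (M = 4 ∧ r = 2 ∧ m = 2) := by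
  have hm2 : 2 ≤ m := by
    by_contra h
    have hm1 : m = 1 := by omega
    rw [hm1, mul_one] at hM
    omega
  have h2r : r * 2 ≤ M := by rw [hM]; exact Nat.mul_le_mul_left r hm2
  have hd2pos : 1 ≤ d2 := le_trans h1 h12
  obtain ⟨k, hk⟩ := hd2M
  have hk2 : 2 ≤ k := by
    have : d2 * 2 ≤ d2 * k := by omega
    exact Nat.le_of_mul_le_mul_left this hd2pos
  have hk4 : k ≤ 4 := by
    have h4 : d2 * k ≤ d2 * 4 := by omega
    exact Nat.le_of_mul_le_mul_left h4 hd2pos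
  interval_cases k
  · -- k = 2 : M = d2 * 2
    have hd2eq : d2 = d1 + r := by omega
    have hgcd1 : Nat.gcd d1 r = 1 := by
      refine hco _ (Nat.gcd_dvd_left _ _) ?_ (Nat.gcd_dvd_right _ _)
      rw [hd2eq]; exact Nat.dvd_add (Nat.gcd_dvd_left _ _) (Nat.gcd_dvd_right _ _)
    have hm3 : 3 ≤ m := by
      by_contra h
      have hm2' : m = 2 := by omega
      rw [hm2', Nat.mul_comm] at hM
      omega
    obtain ⟨m', rfl⟩ : ∃ m', m = m' + 3 := ⟨m - 3, by omega⟩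
    have h2 : r * m' + 3 * r = 2 * d1 + 2 * r := by
      have : r * (m' + 3) = r * m' + 3 * r := by ring
      omega
    have hdvd : r ∣ 2 * d1 := ⟨m' + 1, by rw [Nat.mul_add, Nat.mul_one]; omega⟩
    have hr2 : r ∣ 2 := (Nat.coprime_comm.mp hgcd1).dvd_of_dvd_mul_right hdvd
    have hre : r = 2 := by have := Nat.le_of_dvd (by norm_num) hr2; omega
    subst hre
    have hd1m : d1 = m' + 1 := by omega
    have hd14 : d1 ∣ 4 := by
      have h5 : d1 ∣ M - 2 * d1 := Nat.dvd_sub hd1M (dvd_mul_left d1 2)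
      have h6 : M - 2 * d1 = 4 := by omega
      rwa [h6] at h5
    have hd1le : d1 ≤ 4 := Nat.le_of_dvd (by norm_num) hd14
    interval_cases d1
    · exact Or.inl ⟨by omega, rfl, by omega⟩
    · have := hco 2 ⟨1, rfl⟩ ⟨2, by omega⟩ ⟨1, rfl⟩; omega
    · omega
    · have := hco 2 ⟨2, rfl⟩ ⟨3, by omega⟩ ⟨1, rfl⟩; omega
  · -- k = 3 : M = d2 * 3
    have hrd2 : d2 ≤ r := by omega
    have hm3 : m ≤ 3 := by
      have h4 : r * m ≤ r * 3 := by rw [← hM]; omega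
      exact Nat.le_of_mul_le_mul_left h4 (by omega)
    interval_cases m
    · -- m = 2
      rw [Nat.mul_comm] at hM
      have hd2' : d2 = 2 * d1 := by omega
      have hrv : r = 3 * d1 := by omega
      have := hco d1 ⟨1, by omega⟩ ⟨2, by omega⟩ ⟨3, by omega⟩
      exact Or.inr (Or.inl ⟨by omega, by omega, rfl⟩)
    · -- m = 3
      rw [Nat.mul_comm] at hM
      have := hco d2 ⟨1, by omega⟩ ⟨1, by omega⟩ ⟨1, by omega⟩
      omega
  · -- k = 4 : M = d2 * 4
    have hrd2 : 2 * d2 ≤ r := by omega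
    have hm2' : m ≤ 2 := by
      have h4 : r * m ≤ r * 2 := by rw [← hM]; omega
      exact Nat.le_of_mul_le_mul_left h4 (by omega)
    have hmv : m = 2 := by omega
    subst hmv
    rw [Nat.mul_comm] at hM
    have := hco d2 ⟨1, by omega⟩ ⟨1, by omega⟩ ⟨2, by omega⟩
    exact Or.inr (Or.inr ⟨by omega, by omega, rfl⟩)

private lemma core3 (M r m d1 d2 d3 : ℕ) (hr : 2 ≤ r) (hm : 1 ≤ m) (hM : M = r * m)
    (h1 : 1 ≤ d1) (h12 : d1 ≤ d2) (h23 : d2 ≤ d3)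
    (hd2M : d2 ∣ M) (hd3M : d3 ∣ M)
    (ha : 2 * d1 ≤ M) (hb : 2 * d2 ≤ M) (hc : 2 * d3 ≤ M)
    (hsum : d1 + d2 + d3 + r = 2 * M)
    (hco : ∀ v, v ∣ d1 → v ∣ d2 → v ∣ d3 → v ∣ r → v = 1) :
    (M = 3 ∧ r = 3 ∧ m = 1) ∨ (M = 4 ∧ r = 4 ∧ m = 1) ∨ (M = 6 ∧ r = 6 ∧ m = 1) := by
  have hM2r : M ≤ 2 * r := by omega
  have hm2 : m ≤ 2 := by
    have h4 : r * m ≤ r * 2 := by rw [← hM]; omega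
    exact Nat.le_of_mul_le_mul_left h4 (by omega)
  interval_cases m
  · -- m = 1
    rw [mul_one] at hM
    subst hM
    have hd3pos : 1 ≤ d3 := by omega
    obtain ⟨k, hk⟩ := hd3M
    have hk2 : 2 ≤ k := Nat.le_of_mul_le_mul_left (by omega) hd3pos
    have hk3 : k ≤ 3 := Nat.le_of_mul_le_mul_left (by omega : d3 * k ≤ d3 * 3) hd3pos
    interval_cases k
    · -- M = d3 * 2
      have hd2pos : 1 ≤ d2 := by omega
      obtain ⟨k2, hk2'⟩ := hd2M
      have hk22 : 2 ≤ k2 := Nat.le_of_mul_le_mul_left (by omega) hd2pos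
      have hk24 : k2 ≤ 4 := Nat.le_of_mul_le_mul_left (by omega : d2 * k2 ≤ d2 * 4) hd2pos
      interval_cases k2
      · omega
      · -- M = d2 * 3
        have := hco d1 ⟨1, by omega⟩ ⟨2, by omega⟩ ⟨3, by omega⟩ ⟨6, by omega⟩
        exact Or.inr (Or.inr ⟨by omega, by omega, rfl⟩)
      · -- M = d2 * 4
        have := hco d2 ⟨1, by omega⟩ ⟨1, by omega⟩ ⟨2, by omega⟩ ⟨4, by omega⟩
        exact Or.inr (Or.inl ⟨by omega, by omega, rfl⟩)
    · -- M = d3 * 3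
      have := hco d3 ⟨1, by omega⟩ ⟨1, by omega⟩ ⟨1, by omega⟩ ⟨3, by omega⟩
      exact Or.inl ⟨by omega, by omega, rfl⟩
  · -- m = 2
    rw [Nat.mul_comm] at hM
    have := hco r ⟨1, by omega⟩ ⟨1, by omega⟩ ⟨1, by omega⟩ ⟨1, by omega⟩
    omega

set_option maxHeartbeats 1000000 in
private lemma core (M r m l : ℕ) (d : Fin l → ℕ) (hr : 2 ≤ r) (hm : 1 ≤ m) (hM : M = r * m)
    (hdM : ∀ j, d j ∣ M) (hd1 : ∀ j, 1 ≤ d j)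
    (hsum : ∑ j, d j + r = (l - 1) * M)
    (hkey : ∀ v, (∀ j, v ∣ d j) → v ∣ r → v = 1) :
    (M = 2 ∧ r = 2 ∧ m = 1) ∨ (M = 3 ∧ r = 3 ∧ m = 1) ∨ (M = 4 ∧ r = 4 ∧ m = 1) ∨
    (M = 4 ∧ r = 2 ∧ m = 2) ∨ (M = 6 ∧ r = 6 ∧ m = 1) ∨ (M = 6 ∧ r = 3 ∧ m = 2) ∨
    (M = 6 ∧ r = 2 ∧ m = 3) := by
  have hMpos : 0 < M := by rw [hM]; positivity
  have hrM : r ≤ M := by rw [hM]; exact Nat.le_mul_of_pos_right r hm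
  have hdle : ∀ j, d j ≤ M := fun j => Nat.le_of_dvd hMpos (hdM j)
  -- l ≥ 2
  have hl2 : 2 ≤ l := by
    by_contra h
    interval_cases l
    · simp at hsum; omega
    · rw [Fin.sum_univ_one] at hsum
      have := hd1 0; simp at hsum; omega
  -- total deficiency
  have hsplit : (∑ j, d j) + (∑ j, (M - d j)) = l * M := by
    rw [← Finset.sum_add_distrib]
    rw [Finset.sum_congr rfl (fun j _ => (by have := hdle j; omega : d j + (M - d j) = M))]
    simp [Finset.card_univ, Nat.mul_comm]
  have hlM : l * M = (l - 1) * M + M := by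
    obtain ⟨p, rfl⟩ : ∃ p, l = p + 1 := ⟨l - 1, by omega⟩
    simp [Nat.add_mul]
  have htot : ∑ j, (M - d j) = M + r := by omega
  -- the set of deficient indices
  set S : Finset (Fin l) := Finset.univ.filter (fun j => d j ≠ M) with hSdef
  have hSc : ∀ j, j ∉ S → d j = M := by
    intro j hj
    by_contra h
    exact hj (Finset.mem_filter.mpr ⟨Finset.mem_univ j, h⟩)
  have hS2 : ∀ j ∈ S, 2 * d j ≤ M := by
    intro j hj
    have hne : d j ≠ M := (Finset.mem_filter.mp hj).2
    obtain ⟨c, hc⟩ := hdM j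
    have hc2 : 2 ≤ c := by
      rcases Nat.lt_or_ge c 2 with h | h
      · interval_cases c <;> omega
      · exact h
    calc 2 * d j = d j * 2 := by ring
      _ ≤ d j * c := Nat.mul_le_mul_left _ hc2
      _ = M := hc.symm
  have hSsum : ∑ j ∈ S, (M - d j) = M + r := by
    rw [← htot]
    exact Finset.sum_subset (Finset.subset_univ S)
      (fun x _ hx => by rw [hSc x hx]; omega)
  -- card bounds
  have hub : S.card * M ≤ 2 * (M + r) := by
    have h1 : S.card • M ≤ ∑ j ∈ S, 2 * (M - d j) :=
      Finset.card_nsmul_le_sum S _ M (fun j hj => by have := hS2 j hj; have := hdle j; omega)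
    rw [← Finset.mul_sum, hSsum] at h1
    simpa using h1
  have hlb : M + r ≤ S.card * (M - 1) := by
    have h1 : ∑ j ∈ S, (M - d j) ≤ S.card • (M - 1) :=
      Finset.sum_le_card_nsmul S _ (M - 1) (fun j hj => by have := hd1 j; omega)
    rw [hSsum] at h1
    simpa using h1
  have hcard4 : S.card ≤ 4 := by
    have : S.card * M ≤ 4 * M := by omega
    exact Nat.le_of_mul_le_mul_right (by omega) hMpos
  have hcard2 : 2 ≤ S.card := by
    by_contra h
    have h1 : S.card ≤ 1 := by omega
    have : S.card * (M - 1) ≤ 1 * (M - 1) := Nat.mul_le_mul_right _ h1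
    omega
  have hc : S.card = 2 ∨ S.card = 3 ∨ S.card = 4 := by omega
  rcases hc with h2 | h3 | h4
  · -- |S| = 2
    obtain ⟨x, y, hxy, hSxy⟩ := Finset.card_eq_two.mp h2
    have hx : x ∈ S := by rw [hSxy]; simp
    have hy : y ∈ S := by rw [hSxy]; simp
    have hsum2 : (M - d x) + (M - d y) = M + r := by
      rw [hSxy, Finset.sum_pair hxy] at hSsum; exact hSsum
    have heq : d x + d y + r = M := by
      have := hdle x; have := hdle y; have := hS2 x hx; have := hS2 y hy; omega
    have hco2 : ∀ v, v ∣ d x → v ∣ d y → v ∣ r → v = 1 := by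
      intro v hvx hvy hvr
      refine hkey v (fun j => ?_) hvr
      by_cases hj : j ∈ S
      · rw [hSxy] at hj
        rcases Finset.mem_insert.mp hj with h | h
        · rw [h]; exact hvx
        · rw [Finset.mem_singleton.mp h]; exact hvy
      · rw [hSc j hj]; exact hvx.trans (hdM x)
    have hres : (M = 6 ∧ r = 2 ∧ m = 3) ∨ (M = 6 ∧ r = 3 ∧ m = 2) ∨ (M = 4 ∧ r = 2 ∧ m = 2) := by
      rcases le_total (d x) (d y) with hle | hle
      · exact core2 M r m (d x) (d y) hr hm hM (hd1 x) hle (hdM x) (hdM y)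
          (hS2 x hx) (hS2 y hy) heq hco2
      · exact core2 M r m (d y) (d x) hr hm hM (hd1 y) hle (hdM y) (hdM x)
          (hS2 y hy) (hS2 x hx) (by omega)
          (fun v h1 h2 h3 => hco2 v h2 h1 h3)
    rcases hres with h | h | h
    · exact Or.inr (Or.inr (Or.inr (Or.inr (Or.inr (Or.inr h)))))
    · exact Or.inr (Or.inr (Or.inr (Or.inr (Or.inr (Or.inl h)))))
    · exact Or.inr (Or.inr (Or.inr (Or.inl h)))
  · -- |S| = 3
    obtain ⟨x, y, z, hxy, hxz, hyz, hSxyz⟩ := Finset.card_eq_three.mp h3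
    have hx : x ∈ S := by rw [hSxyz]; simp
    have hy : y ∈ S := by rw [hSxyz]; simp
    have hz : z ∈ S := by rw [hSxyz]; simp
    have hsum3 : (M - d x) + (M - d y) + (M - d z) = M + r := by
      rw [hSxyz, Finset.sum_insert (by simp [hxy, hxz]),
        Finset.sum_insert (by simp [hyz]), Finset.sum_singleton] at hSsum
      omega
    have heq : d x + d y + d z + r = 2 * M := by
      have := hdle x; have := hdle y; have := hdle z
      have := hS2 x hx; have := hS2 y hy; have := hS2 z hz; omega
    have hco3 : ∀ v, v ∣ d x → v ∣ d y → v ∣ d z → v ∣ r → v = 1 := by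
      intro v hvx hvy hvz hvr
      refine hkey v (fun j => ?_) hvr
      by_cases hj : j ∈ S
      · rw [hSxyz] at hj
        rcases Finset.mem_insert.mp hj with h | h
        · rw [h]; exact hvx
        · rcases Finset.mem_insert.mp h with h' | h'
          · rw [h']; exact hvy
          · rw [Finset.mem_singleton.mp h']; exact hvz
      · rw [hSc j hj]; exact hvx.trans (hdM x)
    have hres : (M = 3 ∧ r = 3 ∧ m = 1) ∨ (M = 4 ∧ r = 4 ∧ m = 1) ∨ (M = 6 ∧ r = 6 ∧ m = 1) := by
      rcases le_total (d x) (d y) with h1 | h1 <;>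
        rcases le_total (d y) (d z) with h2 | h2 <;>
        rcases le_total (d x) (d z) with h3' | h3'
      · exact core3 M r m (d x) (d y) (d z) hr hm hM (hd1 x) h1 h2 (hdM y) (hdM z)
          (hS2 x hx) (hS2 y hy) (hS2 z hz) heq hco3
      · exact core3 M r m (d x) (d y) (d z) hr hm hM (hd1 x) h1 h2 (hdM y) (hdM z)
          (hS2 x hx) (hS2 y hy) (hS2 z hz) heq hco3
      · exact core3 M r m (d x) (d z) (d y) hr hm hM (hd1 x) h3' (by omega) (hdM z) (hdM y)
          (hS2 x hx) (hS2 z hz) (hS2 y hy) (by omega)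
          (fun v a b c e => hco3 v a c b e)
      · exact core3 M r m (d z) (d x) (d y) hr hm hM (hd1 z) (by omega) h1 (hdM x) (hdM y)
          (hS2 z hz) (hS2 x hx) (hS2 y hy) (by omega)
          (fun v a b c e => hco3 v b c a e)
      · exact core3 M r m (d y) (d x) (d z) hr hm hM (hd1 y) h1 h3' (hdM x) (hdM z)
          (hS2 y hy) (hS2 x hx) (hS2 z hz) (by omega)
          (fun v a b c e => hco3 v b a c e)
      · exact core3 M r m (d y) (d z) (d x) hr hm hM (hd1 y) h2 (by omega) (hdM z) (hdM x)
          (hS2 y hy) (hS2 z hz) (hS2 x hx) (by omega)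
          (fun v a b c e => hco3 v c a b e)
      · exact core3 M r m (d y) (d z) (d x) hr hm hM (hd1 y) (by omega) (by omega) (hdM z) (hdM x)
          (hS2 y hy) (hS2 z hz) (hS2 x hx) (by omega)
          (fun v a b c e => hco3 v c a b e)
      · exact core3 M r m (d z) (d y) (d x) hr hm hM (hd1 z) h2 h1 (hdM y) (hdM x)
          (hS2 z hz) (hS2 y hy) (hS2 x hx) (by omega)
          (fun v a b c e => hco3 v c b a e)
    rcases hres with h | h | h
    · exact Or.inr (Or.inl h)
    · exact Or.inr (Or.inr (Or.inl h))
    · exact Or.inr (Or.inr (Or.inr (Or.inr (Or.inl h))))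
  · -- |S| = 4
    have hge : ∀ j ∈ S, M ≤ 2 * (M - d j) := by
      intro j hj; have := hS2 j hj; have := hd1 j; omega
    have h4M : 4 * M ≤ 2 * (M + r) := by
      have h1 : S.card • M ≤ ∑ j ∈ S, 2 * (M - d j) := Finset.card_nsmul_le_sum S _ M hge
      rw [← Finset.mul_sum, hSsum, h4] at h1
      simpa using h1
    have hrM' : r = M := by omega
    have heach : ∀ j ∈ S, 2 * (M - d j) = M := by
      intro j hj
      by_contra hne
      have hlt : M < 2 * (M - d j) := lt_of_le_of_ne (hge j hj) (fun h => hne h.symm)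
      have hstrict : ∑ i ∈ S, M < ∑ i ∈ S, 2 * (M - d i) :=
        Finset.sum_lt_sum (fun i hi => hge i hi) ⟨j, hj, hlt⟩
      rw [Finset.sum_const, ← Finset.mul_sum, hSsum, h4, smul_eq_mul] at hstrict
      omega
    have hSne : S.Nonempty := Finset.card_pos.mp (by omega)
    obtain ⟨j0, hj0⟩ := hSne
    have h2v : 2 * d j0 = M := by have := heach j0 hj0; have := hdle j0; omega
    have hv1 : d j0 = 1 := by
      refine hkey (d j0) (fun j => ?_) ⟨2, by omega⟩
      by_cases hj : j ∈ S
      · have := heach j hj; have := hdle j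
        have : d j = d j0 := by omega
        rw [this]
      · rw [hSc j hj]; exact ⟨2, by omega⟩
    have hMv : M = 2 := by omega
    have hmv : m = 1 := by
      have : r * m = 2 := by rw [← hM]; omega
      have : r = 2 := by omega
      nlinarith
    exact Or.inl ⟨hMv, by omega, hmv⟩

end Prop216Aux

/-- Proposition 2.16: if `m ≤ n` are coprime, `r > 1`, and a partition
`n₁,…,n_ℓ` of `rn` into positive parts satisfies `gcd(rm, n₁, …, n_ℓ, r) = 1`
and `(ℓ−1)rm − r = ∑ⱼ gcd(rm, nⱼ)`, then the bidegree `(rm, rn)` has one of the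
forms `(2,2N)`, `(3,3N)`, `(4,4N)`, `(4,4s+2)`, `(6,6N)`, `(6,6s+2)`,
`(6,6s+3)`, `(6,6s+4)` with `N`, `s` positive; in particular
`rm ∈ {2,3,4,6}`. -/
theorem prop_two_sixteen
    (m n r l : ℕ) (hm : 0 < m) (hn : 0 < n) (hr : 1 < r)
    (hmn : Nat.gcd m n = 1) (hmlen : m ≤ n)
    (b : Fin l → ℕ) (hb : ∀ j, 0 < b j) (hsb : ∑ j, b j = r * n)
    (hcop : Nat.gcd (r * m) (Nat.gcd (Finset.univ.gcd b) r) = 1)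
    (hδ : ∑ j, Nat.gcd (r * m) (b j) + r = (l - 1) * (r * m)) :
    ((∃ N : ℕ, 0 < N ∧
        ((r * m, r * n) = (2, 2 * N) ∨ (r * m, r * n) = (3, 3 * N) ∨
         (r * m, r * n) = (4, 4 * N) ∨ (r * m, r * n) = (6, 6 * N))) ∨
     (∃ s : ℕ, 0 < s ∧
        ((r * m, r * n) = (4, 4 * s + 2) ∨ (r * m, r * n) = (6, 6 * s + 2) ∨
         (r * m, r * n) = (6, 6 * s + 3) ∨ (r * m, r * n) = (6, 6 * s + 4)))) ∧
    r * m ∈ ({2, 3, 4, 6} : Set ℕ) := by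
  -- simplify the coprimality hypothesis
  have hgr : Nat.gcd (Finset.univ.gcd b) r = 1 := by
    have hdvd : Nat.gcd (Finset.univ.gcd b) r ∣ r * m :=
      (Nat.gcd_dvd_right _ _).trans (dvd_mul_right r m)
    rw [Nat.gcd_eq_right hdvd] at hcop
    exact hcop
  have hkey : ∀ v, (∀ j, v ∣ Nat.gcd (r * m) (b j)) → v ∣ r → v = 1 := by
    intro v hv hvr
    have hvg : v ∣ Finset.univ.gcd b :=
      Finset.dvd_gcd (fun j _ => (hv j).trans (Nat.gcd_dvd_right _ _))
    have : v ∣ Nat.gcd (Finset.univ.gcd b) r := Nat.dvd_gcd hvg hvr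
    rw [hgr] at this
    exact Nat.dvd_one.mp this
  have hfin := core (r * m) r m l (fun j => Nat.gcd (r * m) (b j)) hr hm rfl
    (fun j => Nat.gcd_dvd_left _ _)
    (fun j => Nat.gcd_pos_of_pos_left _ (by positivity))
    hδ hkey
  rcases hfin with ⟨h1, h2, h3⟩ | ⟨h1, h2, h3⟩ | ⟨h1, h2, h3⟩ | ⟨h1, h2, h3⟩ |
    ⟨h1, h2, h3⟩ | ⟨h1, h2, h3⟩ | ⟨h1, h2, h3⟩ <;> subst h2 <;> subst h3
  · exact ⟨Or.inl ⟨n, hn, Or.inl (by norm_num)⟩, by norm_num⟩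
  · exact ⟨Or.inl ⟨n, hn, Or.inr (Or.inl (by norm_num))⟩, by norm_num⟩
  · exact ⟨Or.inl ⟨n, hn, Or.inr (Or.inr (Or.inl (by norm_num)))⟩, by norm_num⟩
  · -- (4, 2, 2) : r = 2, m = 2, n odd ≥ 3
    have h2n : ¬ 2 ∣ n := by
      intro hd
      have : (2 : ℕ) ∣ Nat.gcd 2 n := Nat.dvd_gcd dvd_rfl hd
      rw [hmn] at this
      omega
    refine ⟨Or.inr ⟨(n - 1) / 2, by omega, Or.inl ?_⟩, by norm_num⟩
    simp only [Prod.mk.injEq]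
    constructor
    · norm_num
    · omega
  · exact ⟨Or.inl ⟨n, hn, Or.inr (Or.inr (Or.inr (by norm_num)))⟩, by norm_num⟩
  · -- (6, 3, 2) : r = 3, m = 2
    have h2n : ¬ 2 ∣ n := by
      intro hd
      have : (2 : ℕ) ∣ Nat.gcd 2 n := Nat.dvd_gcd dvd_rfl hd
      rw [hmn] at this
      omega
    refine ⟨Or.inr ⟨(n - 1) / 2, by omega, Or.inr (Or.inr (Or.inl ?_))⟩, by norm_num⟩
    simp only [Prod.mk.injEq]
    constructor
    · norm_num
    · omega
  · -- (6, 2, 3) : r = 2, m = 3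
    have h3n : ¬ 3 ∣ n := by
      intro hd
      have : (3 : ℕ) ∣ Nat.gcd 3 n := Nat.dvd_gcd dvd_rfl hd
      rw [hmn] at this
      omega
    by_cases hmod : n % 3 = 1
    · refine ⟨Or.inr ⟨(n - 1) / 3, by omega, Or.inr (Or.inl ?_)⟩, by norm_num⟩
      simp only [Prod.mk.injEq]
      constructor
      · norm_num
      · omega
    · have hmod2 : n % 3 = 2 := by omega
      refine ⟨Or.inr ⟨(n - 2) / 3, by omega, Or.inr (Or.inr (Or.inr ?_))⟩, by norm_num⟩
      simp only [Prod.mk.injEq]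
      constructor
      · norm_num
      · omega
end

section
/- The triples (m, a, b) of positive integers with a ≤ b satisfying (m+1)/a + (m+1)/b = m (equivalently (m+1)(a+b) = m·a·b) are exactly: (1, 3, 6), (1, 4, 4), (2, 2, 6), (2, 3, 3), (3, 2, 4), and (5, 2, 3). -/
/-- The triples `(m, a, b)` of positive integers with `a ≤ b` satisfying
`(m+1)/a + (m+1)/b = m`, equivalently `(m+1)(a+b) = m·a·b`, are exactly
`(1,3,6)`, `(1,4,4)`, `(2,2,6)`, `(2,3,3)`, `(3,2,4)`, `(5,2,3)`. -/
theorem egyptian_fraction_classification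
    (m a b : ℕ) (hm : 0 < m) (ha : 0 < a) (hb : 0 < b) (hab : a ≤ b) :
    (m + 1) * (a + b) = m * a * b ↔
      (m, a, b) = (1, 3, 6) ∨ (m, a, b) = (1, 4, 4) ∨ (m, a, b) = (2, 2, 6) ∨
      (m, a, b) = (2, 3, 3) ∨ (m, a, b) = (3, 2, 4) ∨ (m, a, b) = (5, 2, 3) := by
  constructor
  · intro h
    -- a ≥ 2
    have ha2 : 2 ≤ a := by
      rcases Nat.lt_or_ge a 2 with h1 | h1
      · interval_cases a
        nlinarith
      · exact h1
    -- m*a ≤ 2*(m+1)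
    have key : m * a ≤ 2 * (m + 1) := by
      have : m * a * b ≤ (m + 1) * (2 * b) := by
        rw [← h]; nlinarith
      have hb0 : 0 < b := hb
      nlinarith
    -- a ≤ 4
    have ha4 : a ≤ 4 := by nlinarith
    -- m ≤ 5
    have hm5 : m ≤ 5 := by
      rcases Nat.lt_or_ge a 3 with h1 | h1
      · -- a = 2
        have haa : a = 2 := by omega
        subst haa
        rcases Nat.lt_or_ge b 3 with h2 | h2
        · have : b = 2 := by omega
          subst this; nlinarith
        · nlinarith
      · nlinarith
    -- b ≤ 24
    have hma : m + 2 ≤ m * a := by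
      rcases Nat.lt_or_ge (m * a) (m + 2) with h1 | h1
      · exfalso
        have : m * a = m + 1 ∨ m * a ≤ m := by omega
        rcases this with h2 | h2 <;> nlinarith
      · exact h1
    have hb24 : b ≤ 24 := by
      have h1 : b * (m + 2) ≤ (m + 1) * a + (m + 1) * b := by nlinarith
      have h2 : b ≤ (m + 1) * a := by nlinarith
      have : (m + 1) * a ≤ 6 * 4 := Nat.mul_le_mul (by omega) ha4
      omega
    simp only [Prod.mk.injEq]
    interval_cases m <;> interval_cases a <;> interval_cases b <;> omega
  · rintro (h | h | h | h | h | h) <;>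
      (injection h with h1 h2; injection h2 with h2 h3; subst h1; subst h2; subst h3; norm_num)
end

section
/- Let M and N be positive integers, let m₁,…,m_k and m'₁,…,m'_{k'} be partitions of M into positive parts, and let n₁,…,n_ℓ and n'₁,…,n'_{ℓ'} be partitions of N into positive parts, and suppose the gcd of all parts m₁,…,m_k, m'₁,…,m'_{k'}, n₁,…,n_ℓ, n'₁,…,n'_{ℓ'} equals 1. If (ℓ+ℓ')·M + (k+k'−2)·N = Σ_{i,j} gcd(m_i, n_j) + Σ_{i',j'} gcd(m'_{i'}, n'_{j'}), then k = k' = 1, M divides every n_j and every n'_{j'}, and consequently M = 1. -/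
/-- Section 2.17 (case `C = P¹`, `D` elliptic): if partitions `a`, `a'` of `M`
and `b`, `b'` of `N` into positive parts have no common divisor among all parts
and satisfy `(ℓ+ℓ')M + (k+k'−2)N = ∑ᵢⱼ gcd(mᵢ,nⱼ) + ∑ᵢ'ⱼ' gcd(m'ᵢ',n'ⱼ')`, then
`k = k' = 1`, `M` divides every `nⱼ` and every `n'ⱼ'`, and `M = 1`. -/
theorem p1_times_elliptic_case
    (M N k l k' l' : ℕ) (hM : 0 < M) (hN : 0 < N)
    (a : Fin k → ℕ) (ha : ∀ i, 0 < a i) (hsa : ∑ i, a i = M)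
    (b : Fin l → ℕ) (hb : ∀ j, 0 < b j) (hsb : ∑ j, b j = N)
    (a' : Fin k' → ℕ) (ha' : ∀ i, 0 < a' i) (hsa' : ∑ i, a' i = M)
    (b' : Fin l' → ℕ) (hb' : ∀ j, 0 < b' j) (hsb' : ∑ j, b' j = N)
    (hcoprime :
      Nat.gcd (Finset.univ.gcd a)
        (Nat.gcd (Finset.univ.gcd a')
          (Nat.gcd (Finset.univ.gcd b) (Finset.univ.gcd b'))) = 1)
    (heq : (l + l') * M + (k + k' - 2) * N
        = ∑ i, ∑ j, Nat.gcd (a i) (b j) + ∑ i, ∑ j, Nat.gcd (a' i) (b' j)) :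
    k = 1 ∧ k' = 1 ∧ (∀ j, M ∣ b j) ∧ (∀ j', M ∣ b' j') ∧ M = 1 := by
  have hk : 0 < k := by
    rcases Nat.eq_zero_or_pos k with h | h
    · subst h; simp at hsa; omega
    · exact h
  have hk' : 0 < k' := by
    rcases Nat.eq_zero_or_pos k' with h | h
    · subst h; simp at hsa'; omega
    · exact h
  have hS : ∑ i, ∑ j, Nat.gcd (a i) (b j) ≤ l * M := by
    calc ∑ i, ∑ j, Nat.gcd (a i) (b j)
        ≤ ∑ i : Fin k, ∑ _j : Fin l, a i :=
          Finset.sum_le_sum fun i _ =>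
            Finset.sum_le_sum fun j _ => Nat.gcd_le_left _ (ha i)
      _ = l * M := by
          simp only [Finset.sum_const, Finset.card_univ, Fintype.card_fin, smul_eq_mul]
          rw [← Finset.mul_sum, hsa]
  have hS' : ∑ i, ∑ j, Nat.gcd (a' i) (b' j) ≤ l' * M := by
    calc ∑ i, ∑ j, Nat.gcd (a' i) (b' j)
        ≤ ∑ i : Fin k', ∑ _j : Fin l', a' i :=
          Finset.sum_le_sum fun i _ =>
            Finset.sum_le_sum fun j _ => Nat.gcd_le_left _ (ha' i)
      _ = l' * M := by
          simp only [Finset.sum_const, Finset.card_univ, Fintype.card_fin, smul_eq_mul]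
          rw [← Finset.mul_sum, hsa']
  rw [add_mul] at heq
  have h0 : (k + k' - 2) * N = 0 := by
    set S := ∑ i, ∑ j, Nat.gcd (a i) (b j) with hSdef
    set S' := ∑ i, ∑ j, Nat.gcd (a' i) (b' j) with hS'def
    clear_value S S'
    generalize l * M = P at hS heq
    generalize l' * M = P' at hS' heq
    omega
  have hkk : k = 1 ∧ k' = 1 := by
    rcases Nat.mul_eq_zero.mp h0 with h | h
    · omega
    · omega
  obtain ⟨hk1, hk1'⟩ := hkk
  subst hk1; subst hk1'
  have hSeq : ∑ i, ∑ j, Nat.gcd (a i) (b j) = l * M ∧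
      ∑ i, ∑ j, Nat.gcd (a' i) (b' j) = l' * M := by
    rw [h0, add_zero] at heq
    set S := ∑ i, ∑ j, Nat.gcd (a i) (b j) with hSdef
    set S' := ∑ i, ∑ j, Nat.gcd (a' i) (b' j) with hS'def
    clear_value S S'
    generalize l * M = P at hS heq ⊢
    generalize l' * M = P' at hS' heq ⊢
    omega
  have ha0 : a 0 = M := by simpa using hsa
  have ha0' : a' 0 = M := by simpa using hsa'
  have hdvd : ∀ j, M ∣ b j := by
    have h1 : ∑ j, Nat.gcd M (b j) = ∑ _j : Fin l, M := by
      have := hSeq.1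
      simp only [Fin.sum_univ_one, ha0] at this
      simpa [Finset.sum_const, mul_comm] using this
    have h2 := (Finset.sum_eq_sum_iff_of_le
      (fun j _ => Nat.gcd_le_left (b j) hM)).mp h1
    intro j
    have := h2 j (Finset.mem_univ j)
    exact this ▸ Nat.gcd_dvd_right M (b j)
  have hdvd' : ∀ j, M ∣ b' j := by
    have h1 : ∑ j, Nat.gcd M (b' j) = ∑ _j : Fin l', M := by
      have := hSeq.2
      simp only [Fin.sum_univ_one, ha0'] at this
      simpa [Finset.sum_const, mul_comm] using this
    have h2 := (Finset.sum_eq_sum_iff_of_le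
      (fun j _ => Nat.gcd_le_left (b' j) hM)).mp h1
    intro j
    have := h2 j (Finset.mem_univ j)
    exact this ▸ Nat.gcd_dvd_right M (b' j)
  have hM1 : M = 1 := by
    have d1 : M ∣ Finset.univ.gcd a :=
      Finset.dvd_gcd fun i _ => by
        have : i = 0 := Subsingleton.elim i 0
        rw [this, ha0]
    have d2 : M ∣ Finset.univ.gcd a' :=
      Finset.dvd_gcd fun i _ => by
        have : i = 0 := Subsingleton.elim i 0
        rw [this, ha0']
    have d3 : M ∣ Finset.univ.gcd b := Finset.dvd_gcd fun j _ => hdvd j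
    have d4 : M ∣ Finset.univ.gcd b' := Finset.dvd_gcd fun j _ => hdvd' j
    have : M ∣ 1 := hcoprime ▸ Nat.dvd_gcd d1 (Nat.dvd_gcd d2 (Nat.dvd_gcd d3 d4))
    exact Nat.dvd_one.mp this
  exact ⟨rfl, rfl, hdvd, hdvd', hM1⟩
end
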